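/- arXiv:2402.03075 — 5 statements merged into one kernel-verified Lean document; each statement's English description precedes it below -/
import Mathlib

section
/- For 1 < p < ∞ and any nonnegative measurable function f on (0,∞), the Hardy operator H f(x) = (1/x) ∫₀ˣ f(t) dt satisfies ‖Hf‖_{L^p(0,∞)} ≤ (p/(p-1)) ‖f‖_{L^p(0,∞)}. -/
/-!
With `s = (p - 1) / p`, Hölder's inequality against the weight `t ^ (1 / p)` gives the pointwise
bound `(H f x) ^ p ≤ s⁻¹ ^ (p - 1) * x ^ (-s - 1) * ∫₀ˣ f t ^ p * t ^ s`. Integrating over `x > 0`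
and exchanging the integrals (Tonelli), the inner integral `∫ₜ^∞ x ^ (-s - 1) dx = s⁻¹ * t ^ (-s)`
cancels the weight `t ^ s`, so `‖H f‖ₚ ^ p ≤ s⁻¹ ^ p * ‖f‖ₚ ^ p`, and `s⁻¹ = p / (p - 1)`.
-/

open MeasureTheory Set ENNReal

lemma lintegral_Ioo_ofReal_rpow_sub_one {s x : ℝ} (hs : 0 < s) (hx : 0 ≤ x) :
    ∫⁻ t in Ioo 0 x, ENNReal.ofReal t ^ (s - 1) =
      ENNReal.ofReal s⁻¹ * ENNReal.ofReal x ^ s := by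
  have hint : IntegrableOn (fun t : ℝ ↦ t ^ (s - 1)) (Ioo 0 x) := by
    rw [← intervalIntegrable_iff_integrableOn_Ioo_of_le hx]
    exact intervalIntegral.intervalIntegrable_rpow' (by linarith)
  rw [setLIntegral_congr_fun measurableSet_Ioo fun t ht ↦ ENNReal.ofReal_rpow_of_pos ht.1,
    ← ofReal_integral_eq_lintegral_ofReal hint
      ((ae_restrict_iff' measurableSet_Ioo).2
        (.of_forall fun t ht ↦ Real.rpow_nonneg ht.1.le _)),
    ← integral_Ioc_eq_integral_Ioo, ← intervalIntegral.integral_of_le hx,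
    integral_rpow (.inl (by linarith)), ENNReal.ofReal_rpow_of_nonneg hx hs.le,
    ← ENNReal.ofReal_mul (by positivity)]
  simp [Real.zero_rpow hs.ne', div_eq_inv_mul]

lemma lintegral_Ioi_ofReal_rpow_neg_sub_one {s t : ℝ} (hs : 0 < s) (ht : 0 < t) :
    ∫⁻ x in Ioi t, ENNReal.ofReal x ^ (-s - 1) =
      ENNReal.ofReal s⁻¹ * ENNReal.ofReal t ^ (-s) := by
  have he : -s - 1 < -1 := by linarith
  rw [setLIntegral_congr_fun measurableSet_Ioi fun x hx ↦ ENNReal.ofReal_rpow_of_pos (ht.trans hx),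
    ← ofReal_integral_eq_lintegral_ofReal (integrableOn_Ioi_rpow_of_lt he ht)
      ((ae_restrict_iff' measurableSet_Ioi).2
        (.of_forall fun x hx ↦ Real.rpow_nonneg (ht.trans hx).le _)),
    integral_Ioi_rpow_of_lt he ht, ENNReal.ofReal_rpow_of_pos ht,
    ← ENNReal.ofReal_mul (by positivity)]
  congr 1
  rw [sub_add_cancel, neg_div_neg_eq, div_eq_inv_mul]

theorem ENNReal.lintegral_rpow_le_lintegral_mul_weight {α : Type*} [MeasurableSpace α]
    {μ : Measure α} {p : ℝ} (hp : 1 < p) {f w : α → ℝ≥0∞} (hf : AEMeasurable f μ)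
    (hw : AEMeasurable w μ) (hw₀ : ∀ᵐ a ∂μ, w a ≠ 0) (hw_top : ∀ᵐ a ∂μ, w a ≠ ∞) :
    (∫⁻ a, f a ∂μ) ^ p ≤ (∫⁻ a, f a ^ p * w a ^ (p - 1) ∂μ) * (∫⁻ a, (w a)⁻¹ ∂μ) ^ (p - 1) := by
  have hpq := Real.HolderConjugate.conjExponent hp
  set q := p.conjExponent
  have hp₀ : 0 < p := by linarith
  have hq_inv_mul : q⁻¹ * p = p - 1 := by simp only [q, Real.conjExponent]; field_simp
  -- Hölder applied to the factorization `f = (f * w ^ q⁻¹) * (w⁻¹ ^ q⁻¹)`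
  have holder := ENNReal.lintegral_mul_le_Lp_mul_Lq μ hpq
    (f := fun a ↦ f a * w a ^ q⁻¹) (g := fun a ↦ (w a)⁻¹ ^ q⁻¹)
    (hf.mul (hw.pow_const _)) (hw.inv.pow_const _)
  have hfactor : ∀ᵐ a ∂μ, f a * w a ^ q⁻¹ * (w a)⁻¹ ^ q⁻¹ = f a := by
    filter_upwards [hw₀, hw_top] with a h₀ h_top
    rw [mul_assoc, ← ENNReal.mul_rpow_of_nonneg _ _ (inv_nonneg.2 hpq.symm.nonneg),
      ENNReal.mul_inv_cancel h₀ h_top, ENNReal.one_rpow, mul_one]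
  simp only [Pi.mul_apply, lintegral_congr_ae hfactor, ENNReal.mul_rpow_of_nonneg _ _ hp₀.le,
    ← ENNReal.rpow_mul, hq_inv_mul, inv_mul_cancel₀ hpq.symm.ne_zero, ENNReal.rpow_one] at holder
  calc (∫⁻ a, f a ∂μ) ^ p
      ≤ ((∫⁻ a, f a ^ p * w a ^ (p - 1) ∂μ) ^ (1 / p) * (∫⁻ a, (w a)⁻¹ ∂μ) ^ (1 / q)) ^ p :=
        ENNReal.rpow_le_rpow holder hp₀.le
    _ = (∫⁻ a, f a ^ p * w a ^ (p - 1) ∂μ) * (∫⁻ a, (w a)⁻¹ ∂μ) ^ (p - 1) := by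
        rw [ENNReal.mul_rpow_of_nonneg _ _ hp₀.le, ← ENNReal.rpow_mul, ← ENNReal.rpow_mul,
          one_div_mul_cancel hp₀.ne', ENNReal.rpow_one, one_div, hq_inv_mul]

theorem lintegral_Ioi_mul_lintegral_Ioo_swap {a : ℝ} {k g : ℝ → ℝ≥0∞} (hk : Measurable k)
    (hg : Measurable g) :
    ∫⁻ x in Ioi a, k x * ∫⁻ t in Ioo a x, g t = ∫⁻ t in Ioi a, g t * ∫⁻ x in Ioi t, k x := by
  have hF : Measurable (Function.uncurry fun x t : ℝ ↦ (Iio x).indicator (fun t ↦ k x * g t) t) :=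
    ((hk.comp measurable_fst).mul (hg.comp measurable_snd)).indicator
      (measurableSet_lt measurable_snd measurable_fst)
  calc ∫⁻ x in Ioi a, k x * ∫⁻ t in Ioo a x, g t
      = ∫⁻ x in Ioi a, ∫⁻ t in Ioi a, (Iio x).indicator (fun t ↦ k x * g t) t := by
        refine lintegral_congr fun x ↦ ?_
        rw [lintegral_indicator measurableSet_Iio, Measure.restrict_restrict measurableSet_Iio,
          Iio_inter_Ioi, lintegral_const_mul _ hg]
    _ = ∫⁻ t in Ioi a, ∫⁻ x in Ioi a, (Ioi t).indicator (fun x ↦ k x * g t) x :=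
        lintegral_lintegral_swap hF.aemeasurable
    _ = ∫⁻ t in Ioi a, g t * ∫⁻ x in Ioi t, k x := by
        refine setLIntegral_congr_fun measurableSet_Ioi fun t ht ↦ ?_
        rw [lintegral_indicator measurableSet_Ioi, Measure.restrict_restrict measurableSet_Ioi,
          inter_eq_left.2 (Ioi_subset_Ioi (ht.le)), lintegral_mul_const _ hk, mul_comm]

theorem hardy_pointwise_bound {p : ℝ} (hp : 1 < p) {f : ℝ → ℝ≥0∞} (hf : Measurable f) {x : ℝ}
    (hx : 0 < x) :
    ((ENNReal.ofReal x)⁻¹ * ∫⁻ t in Ioo 0 x, f t) ^ p ≤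
      ENNReal.ofReal ((p - 1) / p)⁻¹ ^ (p - 1) * ENNReal.ofReal x ^ (-((p - 1) / p) - 1) *
        ∫⁻ t in Ioo 0 x, f t ^ p * ENNReal.ofReal t ^ ((p - 1) / p) := by
  set s := (p - 1) / p with hs_def
  have hp₀ : 0 < p := by linarith
  have hs : 0 < s := div_pos (by linarith) hp₀
  set A := ∫⁻ t in Ioo 0 x, f t ^ p * ENNReal.ofReal t ^ s
  have holder : (∫⁻ t in Ioo 0 x, f t) ^ p ≤
      A * (ENNReal.ofReal s⁻¹ * ENNReal.ofReal x ^ s) ^ (p - 1) := by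
    have hw₀ : ∀ᵐ t ∂volume.restrict (Ioo 0 x), ENNReal.ofReal t ^ p⁻¹ ≠ 0 :=
      ae_restrict_of_forall_mem measurableSet_Ioo fun t ht ↦ by simp [ht.1, hp₀]
    have hmul : p⁻¹ * (p - 1) = s := by rw [hs_def]; field_simp
    have hneg : -p⁻¹ = s - 1 := by rw [hs_def]; field_simp; ring
    have := ENNReal.lintegral_rpow_le_lintegral_mul_weight hp hf.aemeasurable
      (w := fun t ↦ ENNReal.ofReal t ^ p⁻¹) (by fun_prop) hw₀ (.of_forall fun t ↦ by finiteness)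
    simp only [← ENNReal.rpow_mul, ← ENNReal.rpow_neg, hmul, hneg] at this
    rwa [lintegral_Ioo_ofReal_rpow_sub_one hs hx.le] at this
  calc ((ENNReal.ofReal x)⁻¹ * ∫⁻ t in Ioo 0 x, f t) ^ p
      = ENNReal.ofReal x ^ (-p) * (∫⁻ t in Ioo 0 x, f t) ^ p := by
        rw [ENNReal.mul_rpow_of_nonneg _ _ hp₀.le, ENNReal.inv_rpow, ENNReal.rpow_neg]
    _ ≤ ENNReal.ofReal x ^ (-p) *
          (A * (ENNReal.ofReal s⁻¹ * ENNReal.ofReal x ^ s) ^ (p - 1)) := by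
        gcongr
    _ = ENNReal.ofReal s⁻¹ ^ (p - 1) * ENNReal.ofReal x ^ (-p + s * (p - 1)) * A := by
        rw [ENNReal.mul_rpow_of_nonneg _ _ (by linarith), ← ENNReal.rpow_mul,
          ENNReal.rpow_add _ _ (by simpa using hx) ENNReal.ofReal_ne_top]
        ring
    _ = ENNReal.ofReal s⁻¹ ^ (p - 1) * ENNReal.ofReal x ^ (-s - 1) * A := by
        congr 3
        rw [hs_def]; field_simp
        ring

theorem lintegral_hardy_rpow_le {p : ℝ} (hp : 1 < p) {f : ℝ → ℝ≥0∞} (hf : Measurable f) :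
    ∫⁻ x in Ioi 0, ((ENNReal.ofReal x)⁻¹ * ∫⁻ t in Ioo 0 x, f t) ^ p ≤
      ENNReal.ofReal ((p - 1) / p)⁻¹ ^ p * ∫⁻ t in Ioi 0, f t ^ p := by
  set s := (p - 1) / p
  have hs : 0 < s := div_pos (by linarith) (by linarith)
  set C := ENNReal.ofReal s⁻¹
  calc _ ≤ ∫⁻ x in Ioi 0, C ^ (p - 1) *
          (ENNReal.ofReal x ^ (-s - 1) * ∫⁻ t in Ioo 0 x, f t ^ p * ENNReal.ofReal t ^ s) :=
        setLIntegral_mono' measurableSet_Ioi fun x hx ↦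
          (hardy_pointwise_bound hp hf hx).trans_eq (mul_assoc _ _ _)
    _ = C ^ (p - 1) * ∫⁻ t in Ioi 0,
          f t ^ p * ENNReal.ofReal t ^ s * ∫⁻ x in Ioi t, ENNReal.ofReal x ^ (-s - 1) := by
        rw [lintegral_const_mul' _ _ (by finiteness),
          lintegral_Ioi_mul_lintegral_Ioo_swap (by fun_prop) (by fun_prop)]
    _ = C ^ (p - 1) * ∫⁻ t in Ioi 0, C * f t ^ p := by
        refine congrArg _ (setLIntegral_congr_fun measurableSet_Ioi fun t ht ↦ ?_)
        have ht₀ : ENNReal.ofReal t ≠ 0 := by simpa using ht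
        rw [lintegral_Ioi_ofReal_rpow_neg_sub_one hs ht, mul_left_comm, mul_assoc,
          ← ENNReal.rpow_add _ _ ht₀ ENNReal.ofReal_ne_top, add_neg_cancel, ENNReal.rpow_zero,
          mul_one, mul_comm]
    _ = C ^ p * ∫⁻ t in Ioi 0, f t ^ p := by
        have hCp : C ^ (p - 1) * C = C ^ p := by
          simpa using (ENNReal.rpow_add_of_nonneg (x := C) (p - 1) 1 (by linarith) zero_le_one).symm
        rw [lintegral_const_mul' _ _ (by finiteness), ← mul_assoc, hCp]

/-- Hardy's inequality: for `1 < p < ∞` and a nonnegative measurable function `f` on `(0,∞)`,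
the Hardy operator `H f (x) = (1/x) ∫₀ˣ f(t) dt` satisfies
`‖Hf‖_{L^p(0,∞)} ≤ (p/(p-1)) ‖f‖_{L^p(0,∞)}`. -/
theorem hardy_inequality (p : ℝ) (hp : 1 < p) (f : ℝ → ℝ≥0∞) (hf : Measurable f) :
    (∫⁻ x in Ioi (0 : ℝ), ((ENNReal.ofReal x)⁻¹ * ∫⁻ t in Ioo (0 : ℝ) x, f t) ^ p) ^ (1 / p)
      ≤ ENNReal.ofReal (p / (p - 1)) * (∫⁻ t in Ioi (0 : ℝ), (f t) ^ p) ^ (1 / p) := by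
  have hp₀ : 0 < p := by linarith
  rw [← inv_div (p - 1) p]
  calc _ ≤ (ENNReal.ofReal ((p - 1) / p)⁻¹ ^ p * ∫⁻ t in Ioi 0, f t ^ p) ^ (1 / p) :=
        ENNReal.rpow_le_rpow (lintegral_hardy_rpow_le hp hf) (by positivity)
    _ = ENNReal.ofReal ((p - 1) / p)⁻¹ * (∫⁻ t in Ioi 0, f t ^ p) ^ (1 / p) := by
        rw [ENNReal.mul_rpow_of_nonneg _ _ (by positivity), ← ENNReal.rpow_mul,
          mul_one_div_cancel hp₀.ne', ENNReal.rpow_one]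
end

section
/- For 1 < p < ∞, the constant p/(p-1) is optimal in Hardy's inequality: for every constant C with ‖Hf‖_{L^p(0,∞)} ≤ C‖f‖_{L^p(0,∞)} for all nonnegative f ∈ L^p(0,∞), one has C ≥ p/(p-1). -/
/-!
Test the inequality on `f_a = t ^ a · 𝟙_{t > 1}` (`rpowTail a`; the paper's `f_ε` is
`f_{-1/p-ε}`) for `-1 < a < -1/p`. For `x > 1` one has `(a + 1) · H f_a (x) = x ^ a - x⁻¹`,
so by Minkowski `‖f_a‖_p ≤ (a + 1) C ‖f_a‖_p + ‖f_{-1}‖_p`. As `a ↑ -1/p`,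
`‖f_a‖_p = (-(a p + 1)) ^ (-1/p)` blows up while `‖f_{-1}‖_p` stays finite, so dividing by
`‖f_a‖_p` and letting `a → -1/p` gives `1 / (1 - 1/p) ≤ C`.
-/

open MeasureTheory Set ENNReal Filter Topology

local notation "volIoi" => volume.restrict (Ioi (0 : ℝ))

noncomputable def hardyAvg (f : ℝ → ℝ≥0∞) (x : ℝ) : ℝ≥0∞ :=
  (ENNReal.ofReal x)⁻¹ * ∫⁻ t in Ioo 0 x, f t

noncomputable def rpowTail (a : ℝ) : ℝ → ℝ≥0∞ :=
  (Ioi 1).indicator fun t => ENNReal.ofReal (t ^ a)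

theorem measurable_hardyAvg (f : ℝ → ℝ≥0∞) : Measurable (hardyAvg f) := by
  have hmono : Monotone fun x => ∫⁻ t in Ioo 0 x, f t :=
    fun _ _ hxy => lintegral_mono_set (Ioo_subset_Ioo_right hxy)
  exact ENNReal.measurable_ofReal.inv.mul hmono.measurable

theorem measurable_rpowTail (a : ℝ) : Measurable (rpowTail a) :=
  (by fun_prop : Measurable fun t : ℝ => ENNReal.ofReal (t ^ a)).indicator measurableSet_Ioi

theorem ENNReal.eLpNorm'_const_mul {α : Type*} [MeasurableSpace α] {μ : Measure α} {q : ℝ}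
    (hq : 0 < q) (c : ℝ≥0∞) {f : α → ℝ≥0∞} (hf : AEMeasurable f μ) :
    eLpNorm' (fun x => c * f x) q μ = c * eLpNorm' f q μ := by
  simp only [eLpNorm', enorm_eq_self, ENNReal.mul_rpow_of_nonneg _ _ hq.le]
  rw [lintegral_const_mul'' _ (hf.pow_const q), ENNReal.mul_rpow_of_nonneg _ _ (by positivity),
    ← ENNReal.rpow_mul, mul_one_div_cancel hq.ne', ENNReal.rpow_one]

theorem lintegral_Ioi_one_rpow {b : ℝ} (hb : b < -1) :
    ∫⁻ t in Ioi 1, ENNReal.ofReal (t ^ b) = (ENNReal.ofReal (-(b + 1)))⁻¹ := by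
  rw [← ofReal_integral_eq_lintegral_ofReal (integrableOn_Ioi_rpow_of_lt hb zero_lt_one)
      ((ae_restrict_iff' measurableSet_Ioi).2 (Eventually.of_forall fun t ht =>
        Real.rpow_nonneg (zero_le_one.trans ht.le) b)),
    integral_Ioi_rpow_of_lt hb zero_lt_one, Real.one_rpow,
    ← ENNReal.ofReal_inv_of_pos (by linarith)]
  congr 1
  rw [neg_div, ← div_neg, one_div]

theorem lintegral_Ioo_one_rpow {a x : ℝ} (ha : -1 < a) (hx : 1 ≤ x) :
    ∫⁻ t in Ioo 1 x, ENNReal.ofReal (t ^ a) = ENNReal.ofReal ((x ^ (a + 1) - 1) / (a + 1)) := by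
  have hint : IntegrableOn (fun t : ℝ => t ^ a) (Ioc 1 x) :=
    (intervalIntegrable_iff_integrableOn_Ioc_of_le hx).1
      (intervalIntegral.intervalIntegrable_rpow' ha)
  rw [Measure.restrict_congr_set Ioo_ae_eq_Ioc, ← ofReal_integral_eq_lintegral_ofReal hint
      ((ae_restrict_iff' measurableSet_Ioc).2 (Eventually.of_forall fun t ht =>
        Real.rpow_nonneg (zero_le_one.trans ht.1.le) a)),
    ← intervalIntegral.integral_of_le hx, integral_rpow (Or.inl ha), Real.one_rpow]

theorem eLpNorm'_rpowTail {p a : ℝ} (hp : 0 < p) (hap : a * p < -1) :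
    eLpNorm' (rpowTail a) p volIoi =
      (ENNReal.ofReal (-(a * p + 1)) ^ (1 / p))⁻¹ := by
  have hpow : (fun t => rpowTail a t ^ p) =
      (Ioi 1).indicator fun t => ENNReal.ofReal (t ^ (a * p)) := by
    ext t
    by_cases ht : t ∈ Ioi (1 : ℝ)
    · have ht0 : (0 : ℝ) ≤ t := zero_le_one.trans (le_of_lt ht)
      simp only [rpowTail, indicator_of_mem ht]
      rw [ENNReal.ofReal_rpow_of_nonneg (Real.rpow_nonneg ht0 a) hp.le, Real.rpow_mul ht0]
    · simp only [rpowTail, indicator_of_notMem ht, ENNReal.zero_rpow_of_pos hp]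
  simp only [eLpNorm', enorm_eq_self]
  rw [hpow, lintegral_indicator measurableSet_Ioi, Measure.restrict_restrict measurableSet_Ioi,
    Ioi_inter_Ioi, sup_of_le_left zero_le_one, lintegral_Ioi_one_rpow hap, ENNReal.inv_rpow]

theorem hardyAvg_rpowTail {a x : ℝ} (ha : -1 < a) (hx : 1 < x) :
    hardyAvg (rpowTail a) x = ENNReal.ofReal ((x ^ a - x⁻¹) / (a + 1)) := by
  have hx0 : 0 < x := zero_lt_one.trans hx
  rw [hardyAvg, rpowTail, lintegral_indicator measurableSet_Ioi,
    Measure.restrict_restrict measurableSet_Ioi, Ioi_inter_Ioo, max_eq_left zero_le_one,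
    lintegral_Ioo_one_rpow ha hx.le,
    ← ENNReal.ofReal_inv_of_pos hx0, ← ENNReal.ofReal_mul (inv_nonneg.2 hx0.le)]
  congr 1
  rw [Real.rpow_add_one hx0.ne']
  field_simp

theorem ofReal_inv_mul_rpowTail_le {a x : ℝ} (ha : -1 < a) :
    ENNReal.ofReal (a + 1)⁻¹ * rpowTail a x ≤
      hardyAvg (rpowTail a) x + ENNReal.ofReal (a + 1)⁻¹ * rpowTail (-1) x := by
  by_cases hx : x ∈ Ioi (1 : ℝ)
  · have hc : 0 ≤ (a + 1)⁻¹ := inv_nonneg.2 (by linarith)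
    rw [hardyAvg_rpowTail ha hx, rpowTail, rpowTail, indicator_of_mem hx, indicator_of_mem hx,
      Real.rpow_neg_one, ← ENNReal.ofReal_mul hc, ← ENNReal.ofReal_mul hc]
    refine le_of_eq_of_le ?_ ENNReal.ofReal_add_le
    congr 1
    ring
  · simp [rpowTail, indicator_of_notMem hx]

theorem ofReal_inv_mul_eLpNorm'_rpowTail_le {p a : ℝ} (hp : 1 ≤ p) (ha : -1 < a) :
    ENNReal.ofReal (a + 1)⁻¹ * eLpNorm' (rpowTail a) p volIoi ≤
      eLpNorm' (hardyAvg (rpowTail a)) p volIoi +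
        ENNReal.ofReal (a + 1)⁻¹ * eLpNorm' (rpowTail (-1)) p volIoi := by
  have hp0 : 0 < p := zero_lt_one.trans_le hp
  rw [← ENNReal.eLpNorm'_const_mul hp0 _ (measurable_rpowTail a).aemeasurable,
    ← ENNReal.eLpNorm'_const_mul hp0 _ (measurable_rpowTail (-1)).aemeasurable]
  calc _ ≤ eLpNorm'
        (hardyAvg (rpowTail a) + fun x => ENNReal.ofReal (a + 1)⁻¹ * rpowTail (-1) x) p volIoi :=
      eLpNorm'_mono_enorm_ae hp0.le (Eventually.of_forall fun x => ofReal_inv_mul_rpowTail_le ha)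
    _ ≤ _ := eLpNorm'_add_le (measurable_hardyAvg _).aestronglyMeasurable
        ((measurable_rpowTail (-1)).const_mul _).aestronglyMeasurable hp

theorem eLpNorm'_rpowTail_ne_zero {p a : ℝ} (hp : 0 < p) (hap : a * p < -1) :
    eLpNorm' (rpowTail a) p volIoi ≠ 0 := by
  rw [eLpNorm'_rpowTail hp hap]
  exact ENNReal.inv_ne_zero.2 (by finiteness)

theorem eLpNorm'_rpowTail_ne_top {p a : ℝ} (hp : 0 < p) (hap : a * p < -1) :
    eLpNorm' (rpowTail a) p volIoi ≠ ⊤ := by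
  rw [eLpNorm'_rpowTail hp hap]
  exact ENNReal.inv_ne_top.2
    (ENNReal.rpow_pos (ENNReal.ofReal_pos.2 (by linarith)) ofReal_ne_top).ne'

theorem ofReal_inv_le_of_hardy_bound {p a : ℝ} {C : ℝ≥0∞} (hp : 1 ≤ p) (ha : -1 < a)
    (hap : a * p < -1)
    (hC : eLpNorm' (hardyAvg (rpowTail a)) p volIoi ≤
      C * eLpNorm' (rpowTail a) p volIoi) :
    ENNReal.ofReal (a + 1)⁻¹ ≤ C + ENNReal.ofReal (a + 1)⁻¹ *
      eLpNorm' (rpowTail (-1)) p volIoi * ENNReal.ofReal (-(a * p + 1)) ^ (1 / p) := by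
  have hp0 : 0 < p := zero_lt_one.trans_le hp
  have hN0 := eLpNorm'_rpowTail_ne_zero hp0 hap
  have hNtop := eLpNorm'_rpowTail_ne_top hp0 hap
  have hNinv : (eLpNorm' (rpowTail a) p volIoi)⁻¹ =
      ENNReal.ofReal (-(a * p + 1)) ^ (1 / p) := by
    rw [eLpNorm'_rpowTail hp0 hap, inv_inv]
  refine (ENNReal.mul_le_mul_iff_left hN0 hNtop).1 ?_
  calc _ ≤ C * eLpNorm' (rpowTail a) p volIoi + ENNReal.ofReal (a + 1)⁻¹ *
          eLpNorm' (rpowTail (-1)) p volIoi := by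
        grw [ofReal_inv_mul_eLpNorm'_rpowTail_le hp ha, hC]
    _ = _ := by
      rw [← hNinv, add_mul, mul_assoc _ _⁻¹, ENNReal.inv_mul_cancel hN0 hNtop, mul_one]

theorem ofReal_div_sub_one_le_of_forall_le {p : ℝ} {C K : ℝ≥0∞} (hp : 1 < p)
    (hK : K ≠ ⊤)
    (hbound : ∀ a ∈ Ioo (-1) (-1 / p), ENNReal.ofReal (a + 1)⁻¹ ≤
      C + ENNReal.ofReal (a + 1)⁻¹ * K * ENNReal.ofReal (-(a * p + 1)) ^ (1 / p)) :
    ENNReal.ofReal (p / (p - 1)) ≤ C := by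
  have hp0 : 0 < p := by linarith
  have hcoeff : ContinuousAt (fun a : ℝ => ENNReal.ofReal (a + 1)⁻¹) (-1 / p) :=
    ENNReal.continuous_ofReal.continuousAt.comp
      ((continuousAt_id.add continuousAt_const).inv₀ (show -1 / p + 1 ≠ 0 by
        rw [div_add_one hp0.ne']; exact div_ne_zero (by linarith) hp0.ne'))
  have hleft : Tendsto (fun a : ℝ => ENNReal.ofReal (a + 1)⁻¹) (𝓝[<] (-1 / p))
      (𝓝 (ENNReal.ofReal (p / (p - 1)))) := by
    have hval : (-1 / p + 1)⁻¹ = p / (p - 1) := by field_simp; ring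
    exact hval ▸ hcoeff.tendsto.mono_left nhdsWithin_le_nhds
  have hgap : Tendsto (fun a : ℝ => -(a * p + 1)) (𝓝 (-1 / p)) (𝓝 0) := by
    have := (by fun_prop : Continuous fun a : ℝ => -(a * p + 1)).tendsto (-1 / p)
    rwa [div_mul_cancel₀ _ hp0.ne', neg_add_cancel, neg_zero] at this
  have hgap_rpow : Tendsto (fun a : ℝ => ENNReal.ofReal (-(a * p + 1)) ^ (1 / p)) (𝓝 (-1 / p))
      (𝓝 0) := by
    simpa [hp0] using (ENNReal.tendsto_ofReal hgap).ennrpow_const (1 / p)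
  have hright : Tendsto (fun a : ℝ => C + ENNReal.ofReal (a + 1)⁻¹ * K *
      ENNReal.ofReal (-(a * p + 1)) ^ (1 / p)) (𝓝[<] (-1 / p)) (𝓝 C) := by
    have := (ENNReal.Tendsto.mul (ENNReal.Tendsto.mul_const hcoeff.tendsto (Or.inr hK))
      (Or.inr zero_ne_top) hgap_rpow (Or.inr (mul_ne_top ofReal_ne_top hK))).const_add C
    simpa using this.mono_left nhdsWithin_le_nhds
  exact le_of_tendsto_of_tendsto hleft hright
    (eventually_of_mem (Ioo_mem_nhdsLT (by rw [lt_div_iff₀ hp0]; linarith)) hbound)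

/-- Sharpness of Hardy's inequality: for `1 < p < ∞`, any constant `C` such that
`‖Hf‖_{L^p(0,∞)} ≤ C ‖f‖_{L^p(0,∞)}` for all nonnegative measurable `f ∈ L^p(0,∞)`
must satisfy `C ≥ p/(p-1)`. -/
theorem hardy_constant_sharp (p : ℝ) (hp : 1 < p) (C : ℝ≥0∞)
    (hC : ∀ f : ℝ → ℝ≥0∞, Measurable f →
      (∫⁻ t in Ioi (0 : ℝ), (f t) ^ p) ^ (1 / p) < ⊤ →
      (∫⁻ x in Ioi (0 : ℝ), ((ENNReal.ofReal x)⁻¹ * ∫⁻ t in Ioo (0 : ℝ) x, f t) ^ p) ^ (1 / p)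
        ≤ C * (∫⁻ t in Ioi (0 : ℝ), (f t) ^ p) ^ (1 / p)) :
    ENNReal.ofReal (p / (p - 1)) ≤ C := by
  have hp0 : 0 < p := by linarith
  refine ofReal_div_sub_one_le_of_forall_le hp
    (eLpNorm'_rpowTail_ne_top (a := -1) hp0 (by linarith)) ?_
  rintro a ⟨ha, hap⟩
  rw [lt_div_iff₀ hp0] at hap
  exact ofReal_inv_le_of_hardy_bound hp.le ha hap
    (hC _ (measurable_rpowTail a) (eLpNorm'_rpowTail_ne_top hp0 hap).lt_top)
end

section
/- For n ≥ 1, 1 < p < ∞, and f nonnegative measurable on ℝⁿ, the spherical Hardy operator 𝓗f(x) = (1/(ν_n |x|ⁿ)) ∫_{|y| ≤ |x|} f(y) dy satisfies ‖𝓗f‖_{L^p(ℝⁿ)} ≤ (p/(p-1)) ‖f‖_{L^p(ℝⁿ)}, and the constant p/(p-1) is the operator norm (independent of the dimension n). -/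
open MeasureTheory Set ENNReal Metric

/-!
Upper bound by Schur's test with the weight `w(y) = |y|^(-d/(pq))`, `d = dim E`: the operator
maps `w^q` to `q w^q` and its adjoint maps `w^p` to `q w^p`, so Hölder's inequality for the
measure `K(x, y) dy` (`K` the kernel of `𝓗`) followed by Tonelli gives `‖𝓗f‖_p^p ≤ q^(p/q) q ‖f‖_p^p = q^p ‖f‖_p^p`.

Sharpness: `f = |y|^(-d/p)` on the shell `1 < |y| ≤ R` has `‖f‖_p^p = d ω log R` (`ω` the
volume of the unit ball), and `𝓗f(x) = q (|x|^(-d/p) - |x|^(-d)) ≥ q (1 - A^(-d/q)) |x|^(-d/p)`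
for `A < |x| ≤ R`, so `‖𝓗f‖_p^p ≥ (q (1 - A^(-d/q)))^p d ω log (R/A)`. With `A = t`, `R = t^t`
the ratio of the two is `(q (1 - t^(-d/q)))^p (t - 1) / t → q^p`.
-/

open Module Filter Topology

theorem ENNReal.rpow_one_div_le_mul_rpow_one_div_iff {a b c : ℝ≥0∞} {p : ℝ} (hp : 0 < p) :
    a ^ (1 / p) ≤ c * b ^ (1 / p) ↔ a ≤ c ^ p * b := by
  rw [← ENNReal.rpow_le_rpow_iff hp, ← ENNReal.rpow_mul, one_div_mul_cancel hp.ne',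
    ENNReal.rpow_one, ENNReal.mul_rpow_of_nonneg _ _ hp.le, ← ENNReal.rpow_mul,
    one_div_mul_cancel hp.ne', ENNReal.rpow_one]

section Schur

variable {α β : Type*} [MeasurableSpace α] [MeasurableSpace β] {p q : ℝ}

theorem rpow_lintegral_mul_le_of_weight {ν : Measure β} (hpq : p.HolderConjugate q)
    {k f h : β → ℝ≥0∞} (hk : Measurable k) (hf : Measurable f) (hh : Measurable h)
    (hh₀ : ∀ᵐ y ∂ν, h y ≠ 0) (hh_top : ∀ᵐ y ∂ν, h y ≠ ∞) :
    (∫⁻ y, k y * f y ∂ν) ^ p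
      ≤ (∫⁻ y, k y * (f y * (h y)⁻¹) ^ p ∂ν) * (∫⁻ y, k y * h y ^ q ∂ν) ^ (p / q) := by
  have hp := hpq.pos
  set ν' := ν.withDensity k
  have hk_mul {φ : β → ℝ≥0∞} (hφ : Measurable φ) : ∫⁻ y, k y * φ y ∂ν = ∫⁻ y, φ y ∂ν' :=
    (lintegral_withDensity_eq_lintegral_mul _ hk hφ).symm
  set u : β → ℝ≥0∞ := fun y ↦ f y * (h y)⁻¹
  have hu : Measurable u := hf.mul hh.inv
  have hfu : ∫⁻ y, f y ∂ν' = ∫⁻ y, u y * h y ∂ν' := by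
    refine lintegral_congr_ae ((withDensity_absolutelyContinuous ν k).ae_le ?_)
    filter_upwards [hh₀, hh_top] with y hy₀ hy_top
    rw [mul_assoc, ENNReal.inv_mul_cancel hy₀ hy_top, mul_one]
  have holder := ENNReal.lintegral_mul_le_Lp_mul_Lq ν' hpq hu.aemeasurable hh.aemeasurable
  rw [hk_mul hf, hk_mul (hu.pow_const p), hk_mul (hh.pow_const q), hfu]
  calc (∫⁻ y, u y * h y ∂ν') ^ p
      ≤ ((∫⁻ y, u y ^ p ∂ν') ^ (1 / p) * (∫⁻ y, h y ^ q ∂ν') ^ (1 / q)) ^ p :=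
        ENNReal.rpow_le_rpow holder hp.le
    _ = _ := by
        rw [ENNReal.mul_rpow_of_nonneg _ _ hp.le, ← ENNReal.rpow_mul, ← ENNReal.rpow_mul,
          one_div_mul_cancel hp.ne', ENNReal.rpow_one, one_div_mul_eq_div]

theorem lintegral_rpow_lintegral_mul_le_of_schur {μ : Measure α} {ν : Measure β}
    [SFinite μ] [SFinite ν] (hpq : p.HolderConjugate q) {K : α → β → ℝ≥0∞}
    (hK : Measurable (Function.uncurry K)) {g : α → ℝ≥0∞} {h : β → ℝ≥0∞} (hg : Measurable g)
    (hh : Measurable h) (hh₀ : ∀ᵐ y ∂ν, h y ≠ 0) (hh_top : ∀ᵐ y ∂ν, h y ≠ ∞) {C₁ C₂ : ℝ≥0∞}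
    (hC₁ : ∀ᵐ x ∂μ, ∫⁻ y, K x y * h y ^ q ∂ν ≤ C₁ * g x ^ q)
    (hC₂ : ∀ᵐ y ∂ν, ∫⁻ x, K x y * g x ^ p ∂μ ≤ C₂ * h y ^ p)
    {f : β → ℝ≥0∞} (hf : Measurable f) :
    ∫⁻ x, (∫⁻ y, K x y * f y ∂ν) ^ p ∂μ ≤ C₁ ^ (p / q) * C₂ * ∫⁻ y, f y ^ p ∂ν := by
  have hp := hpq.pos
  have hq := hpq.symm.pos
  set F : β → ℝ≥0∞ := fun y ↦ (f y * (h y)⁻¹) ^ p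
  have hF : Measurable F := (hf.mul hh.inv).pow_const p
  have hKgF : Measurable (Function.uncurry fun x y ↦ K x y * g x ^ p * F y) :=
    (hK.mul ((hg.pow_const p).comp measurable_fst)).mul (hF.comp measurable_snd)
  have pointwise : ∀ᵐ x ∂μ, (∫⁻ y, K x y * f y ∂ν) ^ p
      ≤ C₁ ^ (p / q) * ∫⁻ y, K x y * g x ^ p * F y ∂ν := by
    filter_upwards [hC₁] with x hx
    calc (∫⁻ y, K x y * f y ∂ν) ^ p
        ≤ (∫⁻ y, K x y * F y ∂ν) * (∫⁻ y, K x y * h y ^ q ∂ν) ^ (p / q) :=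
          rpow_lintegral_mul_le_of_weight hpq hK.of_uncurry_left hf hh hh₀ hh_top
      _ ≤ (∫⁻ y, K x y * F y ∂ν) * (C₁ * g x ^ q) ^ (p / q) := by gcongr
      _ = C₁ ^ (p / q) * (g x ^ p * ∫⁻ y, K x y * F y ∂ν) := by
          rw [ENNReal.mul_rpow_of_nonneg _ _ (div_pos hp hq).le, ← ENNReal.rpow_mul,
            mul_div_cancel₀ p hq.ne']
          ring
      _ = C₁ ^ (p / q) * ∫⁻ y, K x y * g x ^ p * F y ∂ν := by
          have hKF : Measurable fun y ↦ K x y * F y := hK.of_uncurry_left.mul hF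
          rw [← lintegral_const_mul _ hKF]
          congr 1
          exact lintegral_congr fun y ↦ by ring
  calc ∫⁻ x, (∫⁻ y, K x y * f y ∂ν) ^ p ∂μ
      ≤ ∫⁻ x, C₁ ^ (p / q) * ∫⁻ y, K x y * g x ^ p * F y ∂ν ∂μ := lintegral_mono_ae pointwise
    _ = C₁ ^ (p / q) * ∫⁻ y, (∫⁻ x, K x y * g x ^ p ∂μ) * F y ∂ν := by
        have hint : Measurable fun x ↦ ∫⁻ y, K x y * g x ^ p * F y ∂ν :=
          hKgF.lintegral_prod_right'
        rw [lintegral_const_mul _ hint,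
          lintegral_lintegral_swap hKgF.aemeasurable]
        congr 1
        refine lintegral_congr fun y ↦ ?_
        have hKg : Measurable fun x ↦ K x y * g x ^ p := hK.of_uncurry_right.mul (hg.pow_const p)
        exact lintegral_mul_const _ hKg
    _ ≤ C₁ ^ (p / q) * ∫⁻ y, C₂ * h y ^ p * F y ∂ν := by
        gcongr C₁ ^ (p / q) * ?_
        exact lintegral_mono_ae (hC₂.mono fun y hy ↦ by gcongr)
    _ = C₁ ^ (p / q) * C₂ * ∫⁻ y, f y ^ p ∂ν := by
        rw [mul_assoc, ← lintegral_const_mul _ (hf.pow_const p)]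
        congr 1
        refine lintegral_congr_ae ?_
        filter_upwards [hh₀, hh_top] with y hy₀ hy_top
        rw [mul_assoc, ← ENNReal.mul_rpow_of_nonneg _ _ hp.le, mul_comm (h y), mul_assoc,
          ENNReal.inv_mul_cancel hy₀ hy_top, mul_one]

end Schur

theorem lintegral_Ioc_ofReal_rpow {a b t : ℝ} (ha : 0 ≤ a) (hab : a ≤ b) (h : -1 < t ∨ 0 < a) :
    ∫⁻ r in Ioc a b, ENNReal.ofReal (r ^ t) = ENNReal.ofReal (∫ r in a..b, r ^ t) := by
  have hint : IntervalIntegrable (· ^ t) volume a b := h.elim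
    intervalIntegral.intervalIntegrable_rpow' fun ha ↦
      intervalIntegral.intervalIntegrable_rpow (Or.inr (by simp [uIcc_of_le hab, ha.not_ge]))
  rw [intervalIntegral.integral_of_le hab, ofReal_integral_eq_lintegral_ofReal
    ((intervalIntegrable_iff_integrableOn_Ioc_of_le hab).1 hint)]
  filter_upwards [ae_restrict_mem measurableSet_Ioc] with r hr
  exact Real.rpow_nonneg (ha.trans hr.1.le) t

theorem lintegral_Ioi_ofReal_rpow {a t : ℝ} (ha : 0 < a) (ht : t < -1) :
    ∫⁻ r in Ioi a, ENNReal.ofReal (r ^ t) = ENNReal.ofReal (-a ^ (t + 1) / (t + 1)) := by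
  rw [← integral_Ioi_rpow_of_lt ht ha, ofReal_integral_eq_lintegral_ofReal
    (integrableOn_Ioi_rpow_of_lt ht ha)]
  filter_upwards [ae_restrict_mem measurableSet_Ioi] with r hr
  exact Real.rpow_nonneg (ha.trans hr).le t

section SphericalHardy

variable {E : Type*} [NormedAddCommGroup E]

noncomputable def annularPower (s R : ℝ) : E → ℝ≥0∞ :=
  ((‖·‖) ⁻¹' Ioc 1 R).indicator fun y ↦ ENNReal.ofReal (‖y‖ ^ s)

variable [MeasurableSpace E]

noncomputable def sphericalHardy (μ : Measure E) (f : E → ℝ≥0∞) (x : E) : ℝ≥0∞ :=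
  (μ (ball 0 ‖x‖))⁻¹ * ∫⁻ y in closedBall 0 ‖x‖, f y ∂μ

noncomputable def sphericalHardyKernel (μ : Measure E) (x y : E) : ℝ≥0∞ :=
  if ‖y‖ ≤ ‖x‖ then (μ (ball 0 ‖x‖))⁻¹ else 0

variable [OpensMeasurableSpace E] (μ : Measure E)

theorem measurable_sphericalHardyKernel :
    Measurable (Function.uncurry (sphericalHardyKernel μ)) := by
  have hball : Measurable fun r : ℝ ↦ μ (ball 0 r) :=
    Monotone.measurable fun r r' hrr' ↦ measure_mono (ball_subset_ball hrr')
  exact Measurable.ite (measurableSet_le measurable_snd.norm measurable_fst.norm)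
    (hball.comp measurable_fst.norm).inv measurable_const

theorem lintegral_sphericalHardyKernel_mul {φ : E → ℝ≥0∞} (hφ : Measurable φ) (x : E) :
    ∫⁻ y, sphericalHardyKernel μ x y * φ y ∂μ = sphericalHardy μ φ x := by
  rw [sphericalHardy, ← lintegral_const_mul _ hφ, ← lintegral_indicator measurableSet_closedBall]
  refine lintegral_congr fun y ↦ ?_
  by_cases h : ‖y‖ ≤ ‖x‖ <;> simp [sphericalHardyKernel, indicator, h]

theorem lintegral_sphericalHardyKernel_mul_left (φ : E → ℝ≥0∞) (y : E) :
    ∫⁻ x, sphericalHardyKernel μ x y * φ x ∂μ =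
      ∫⁻ x in (‖·‖) ⁻¹' Ici ‖y‖, (μ (ball 0 ‖x‖))⁻¹ * φ x ∂μ := by
  rw [← lintegral_indicator (measurableSet_preimage measurable_norm measurableSet_Ici)]
  refine lintegral_congr fun x ↦ ?_
  by_cases h : ‖y‖ ≤ ‖x‖ <;> simp [sphericalHardyKernel, indicator, h]

end SphericalHardy

section AddHaar

variable {E : Type*} [NormedAddCommGroup E] [NormedSpace ℝ E] [FiniteDimensional ℝ E]
  [MeasurableSpace E] [BorelSpace E] [Nontrivial E] (μ : Measure E) [μ.IsAddHaarMeasure]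

theorem lintegral_fun_norm_addHaar {g : ℝ → ℝ≥0∞} (hg : Measurable g) :
    ∫⁻ x, g ‖x‖ ∂μ = finrank ℝ E * μ (ball 0 1) *
      ∫⁻ r in Ioi (0 : ℝ), ENNReal.ofReal (r ^ (finrank ℝ E - 1)) * g r := by
  calc ∫⁻ x, g ‖x‖ ∂μ = ∫⁻ x : ({0}ᶜ : Set E), g ‖(x : E)‖ ∂μ.comap (↑) := by
        rw [lintegral_subtype_comap (measurableSet_singleton 0).compl fun x ↦ g ‖x‖,
          restrict_compl_singleton]
    _ = ∫⁻ z : sphere (0 : E) 1 × Ioi (0 : ℝ), g z.2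
          ∂μ.toSphere.prod (.volumeIoiPow (finrank ℝ E - 1)) := by
      convert μ.measurePreserving_homeomorphUnitSphereProd.lintegral_comp_emb
        (Homeomorph.measurableEmbedding _) (fun z ↦ g z.2) using 3
      simp [homeomorphUnitSphereProd, homeomorphSphereProd]
    _ = μ.toSphere univ * ∫⁻ r : Ioi (0 : ℝ), g r ∂.volumeIoiPow (finrank ℝ E - 1) := by
      rw [lintegral_prod (f := fun z : sphere (0 : E) 1 × Ioi (0 : ℝ) ↦ g z.2)
        (hg.comp (measurable_subtype_coe.comp measurable_snd)).aemeasurable]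
      simp [lintegral_const, mul_comm]
    _ = _ := by
      rw [Measure.toSphere_apply_univ]
      exact congrArg _ <| (lintegral_withDensity_eq_lintegral_mul _
        (measurable_subtype_coe.pow_const _).ennreal_ofReal
        (show Measurable fun r : Ioi (0 : ℝ) ↦ g r from hg.comp measurable_subtype_coe)).trans
        (lintegral_subtype_comap measurableSet_Ioi fun r ↦ ENNReal.ofReal (r ^ _) * g r)

theorem setLIntegral_norm_preimage_rpow {S : Set ℝ} (hS : MeasurableSet S) (s : ℝ) :
    ∫⁻ x in (‖·‖) ⁻¹' S, ENNReal.ofReal (‖x‖ ^ s) ∂μ = μ (ball 0 1) * finrank ℝ E *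
      ∫⁻ r in S ∩ Ioi 0, ENNReal.ofReal (r ^ ((finrank ℝ E : ℝ) - 1 + s)) := by
  have hG : Measurable fun r : ℝ ↦ ENNReal.ofReal (r ^ s) := by fun_prop
  calc ∫⁻ x in (‖·‖) ⁻¹' S, ENNReal.ofReal (‖x‖ ^ s) ∂μ
      = ∫⁻ x, S.indicator (fun r ↦ ENNReal.ofReal (r ^ s)) ‖x‖ ∂μ := by
        rw [← lintegral_indicator (measurableSet_preimage measurable_norm hS)]
        exact lintegral_congr fun x ↦
          Set.indicator_comp_right norm (g := fun r ↦ ENNReal.ofReal (r ^ s))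
    _ = finrank ℝ E * μ (ball 0 1) * ∫⁻ r in S ∩ Ioi 0,
          ENNReal.ofReal (r ^ (finrank ℝ E - 1)) * ENNReal.ofReal (r ^ s) := by
        rw [lintegral_fun_norm_addHaar μ (hG.indicator hS), ← setLIntegral_indicator hS]
        exact congrArg _ (lintegral_congr fun r ↦ (Set.indicator_mul_right S
          (fun r ↦ ENNReal.ofReal (r ^ (finrank ℝ E - 1))) (fun r ↦ ENNReal.ofReal (r ^ s))).symm)
    _ = _ := by
        rw [mul_comm (finrank ℝ E : ℝ≥0∞)]
        refine congrArg _ (setLIntegral_congr_fun (hS.inter measurableSet_Ioi) fun r hr ↦ ?_)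
        have hr : 0 < r := hr.2
        rw [← ENNReal.ofReal_mul (by positivity), ← Real.rpow_natCast, ← Real.rpow_add hr,
          Nat.cast_sub finrank_pos, Nat.cast_one]

theorem setLIntegral_closedBall_norm_rpow {s r : ℝ} (hs : -(finrank ℝ E : ℝ) < s) (hr : 0 ≤ r) :
    ∫⁻ x in closedBall 0 r, ENNReal.ofReal (‖x‖ ^ s) ∂μ = μ (ball 0 1) *
      ENNReal.ofReal (finrank ℝ E / (finrank ℝ E + s) * r ^ (finrank ℝ E + s)) := by
  have hclosedBall : closedBall (0 : E) r = (‖·‖) ⁻¹' Iic r := by ext; simp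
  have hds : (finrank ℝ E : ℝ) - 1 + s + 1 = finrank ℝ E + s := by ring
  rw [hclosedBall, setLIntegral_norm_preimage_rpow μ measurableSet_Iic, Iic_inter_Ioi,
    lintegral_Ioc_ofReal_rpow le_rfl hr (Or.inl (by linarith)),
    integral_rpow (Or.inl (by linarith)),
    hds, Real.zero_rpow (by linarith), mul_assoc, ← ENNReal.ofReal_natCast,
    ← ENNReal.ofReal_mul (by positivity)]
  congr 2
  ring

theorem setLIntegral_norm_preimage_Ici_rpow {s r : ℝ} (hs : s < -(finrank ℝ E : ℝ)) (hr : 0 < r) :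
    ∫⁻ x in (‖·‖) ⁻¹' Ici r, ENNReal.ofReal (‖x‖ ^ s) ∂μ = μ (ball 0 1) *
      ENNReal.ofReal (finrank ℝ E / -(finrank ℝ E + s) * r ^ (finrank ℝ E + s)) := by
  have hds : (finrank ℝ E : ℝ) - 1 + s + 1 = finrank ℝ E + s := by ring
  rw [setLIntegral_norm_preimage_rpow μ measurableSet_Ici, inter_eq_left.2 (Ici_subset_Ioi.2 hr),
    setLIntegral_congr Ioi_ae_eq_Ici.symm, lintegral_Ioi_ofReal_rpow hr (by linarith), hds,
    mul_assoc, ← ENNReal.ofReal_natCast, ← ENNReal.ofReal_mul (by positivity)]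
  congr 2
  rw [div_neg]
  ring

theorem setLIntegral_norm_preimage_Ioc_rpow {s a b : ℝ} (ha : 0 < a) (hab : a ≤ b) :
    ∫⁻ x in (‖·‖) ⁻¹' Ioc a b, ENNReal.ofReal (‖x‖ ^ s) ∂μ = μ (ball 0 1) *
      ENNReal.ofReal (finrank ℝ E * ∫ r in a..b, r ^ ((finrank ℝ E : ℝ) - 1 + s)) := by
  rw [setLIntegral_norm_preimage_rpow μ measurableSet_Ioc,
    inter_eq_left.2 (Ioc_subset_Ioi_self.trans (Ioi_subset_Ioi ha.le)),
    lintegral_Ioc_ofReal_rpow ha.le hab (Or.inr ha), mul_assoc, ← ENNReal.ofReal_natCast,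
    ← ENNReal.ofReal_mul (by positivity)]

theorem setLIntegral_norm_preimage_Ioc_rpow_neg_finrank {a b : ℝ} (ha : 0 < a) (hab : a ≤ b) :
    ∫⁻ x in (‖·‖) ⁻¹' Ioc a b, ENNReal.ofReal (‖x‖ ^ (-(finrank ℝ E : ℝ))) ∂μ =
      μ (ball 0 1) * ENNReal.ofReal (finrank ℝ E * Real.log (b / a)) := by
  have hinv : (fun r : ℝ ↦ r ^ ((finrank ℝ E : ℝ) - 1 + -(finrank ℝ E : ℝ))) = fun r ↦ r⁻¹ := by
    ext r
    rw [show (finrank ℝ E : ℝ) - 1 + -(finrank ℝ E : ℝ) = -1 by ring, Real.rpow_neg_one]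
  rw [setLIntegral_norm_preimage_Ioc_rpow μ ha hab, hinv, integral_inv_of_pos ha (ha.trans_le hab)]

theorem inv_addHaar_ball_zero {r : ℝ} (hr : 0 < r) :
    (μ (ball 0 r))⁻¹ = (μ (ball 0 1))⁻¹ * ENNReal.ofReal (r ^ (-(finrank ℝ E : ℝ))) := by
  rw [Measure.addHaar_ball μ 0 hr.le, ENNReal.mul_inv (Or.inr measure_ball_lt_top.ne)
    (Or.inl ofReal_ne_top), ← ENNReal.ofReal_inv_of_pos (by positivity), Real.rpow_neg hr.le,
    Real.rpow_natCast, mul_comm]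

theorem sphericalHardy_norm_rpow {s : ℝ} (hs : -(finrank ℝ E : ℝ) < s) {x : E} (hx : x ≠ 0) :
    sphericalHardy μ (fun y ↦ ENNReal.ofReal (‖y‖ ^ s)) x =
      ENNReal.ofReal (finrank ℝ E / (finrank ℝ E + s) * ‖x‖ ^ s) := by
  have hr : 0 < ‖x‖ := norm_pos_iff.2 hx
  rw [sphericalHardy, inv_addHaar_ball_zero μ hr, setLIntegral_closedBall_norm_rpow μ hs hr.le,
    mul_mul_mul_comm, ENNReal.inv_mul_cancel (measure_ball_pos μ 0 one_pos).ne'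
      measure_ball_lt_top.ne, one_mul, ← ENNReal.ofReal_mul (by positivity)]
  congr 1
  rw [mul_left_comm, ← Real.rpow_add hr, neg_add_cancel_left]

theorem setLIntegral_inv_addHaar_ball_mul_norm_rpow {s : ℝ} (hs : s < 0) {y : E} (hy : y ≠ 0) :
    ∫⁻ x in (‖·‖) ⁻¹' Ici ‖y‖, (μ (ball 0 ‖x‖))⁻¹ * ENNReal.ofReal (‖x‖ ^ s) ∂μ =
      ENNReal.ofReal (finrank ℝ E / -s * ‖y‖ ^ s) := by
  have hy₀ : 0 < ‖y‖ := norm_pos_iff.2 hy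
  calc ∫⁻ x in (‖·‖) ⁻¹' Ici ‖y‖, (μ (ball 0 ‖x‖))⁻¹ * ENNReal.ofReal (‖x‖ ^ s) ∂μ
      = ∫⁻ x in (‖·‖) ⁻¹' Ici ‖y‖, (μ (ball 0 1))⁻¹ *
          ENNReal.ofReal (‖x‖ ^ (s - finrank ℝ E)) ∂μ := by
        refine setLIntegral_congr_fun (measurableSet_preimage measurable_norm measurableSet_Ici)
          fun x (hx : ‖y‖ ≤ ‖x‖) ↦ ?_
        have hx₀ : 0 < ‖x‖ := hy₀.trans_le hx
        rw [inv_addHaar_ball_zero μ hx₀, mul_assoc, ← ENNReal.ofReal_mul (by positivity),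
          ← Real.rpow_add hx₀, neg_add_eq_sub]
    _ = _ := by
        rw [lintegral_const_mul' _ _ (ENNReal.inv_ne_top.2 (measure_ball_pos μ 0 one_pos).ne'),
          setLIntegral_norm_preimage_Ici_rpow μ (by linarith) hy₀, ← mul_assoc,
          ENNReal.inv_mul_cancel (measure_ball_pos μ 0 one_pos).ne' measure_ball_lt_top.ne,
          one_mul, add_sub_cancel]

theorem lintegral_sphericalHardy_rpow_le {p q : ℝ} (hpq : p.HolderConjugate q) {f : E → ℝ≥0∞}
    (hf : Measurable f) :
    ∫⁻ x, sphericalHardy μ f x ^ p ∂μ ≤ ENNReal.ofReal q ^ p * ∫⁻ y, f y ^ p ∂μ := by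
  set d : ℝ := (finrank ℝ E : ℝ) with hd_def
  have hd : 0 < d := Nat.cast_pos.2 finrank_pos
  have hp := hpq.pos
  have hq := hpq.symm.pos
  set w : E → ℝ≥0∞ := fun y ↦ ENNReal.ofReal (‖y‖ ^ (-(d / (p * q))))
  have hw_rpow {t : ℝ} (ht : 0 ≤ t) (y : E) :
      w y ^ t = ENNReal.ofReal (‖y‖ ^ (-(d / (p * q)) * t)) := by
    rw [ENNReal.ofReal_rpow_of_nonneg (by positivity) ht, ← Real.rpow_mul (norm_nonneg y)]
  have hw_q (y : E) : w y ^ q = ENNReal.ofReal (‖y‖ ^ (-(d / p))) := by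
    rw [hw_rpow hq.le]; congr 3; field_simp
  have hw_p (y : E) : w y ^ p = ENNReal.ofReal (‖y‖ ^ (-(d / q))) := by
    rw [hw_rpow hp.le]; congr 3; field_simp
  have hC₁ : ∀ᵐ x ∂μ,
      ∫⁻ y, sphericalHardyKernel μ x y * w y ^ q ∂μ ≤ ENNReal.ofReal q * w x ^ q := by
    filter_upwards [Measure.ae_ne μ 0] with x hx
    have hdp : -d < -(d / p) := neg_lt_neg (div_lt_self hd hpq.lt)
    have hdq : d + -(d / p) = d / q := by rw [div_eq_mul_inv d q, ← hpq.one_sub_inv]; ring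
    simp_rw [hw_q]
    rw [lintegral_sphericalHardyKernel_mul μ (by fun_prop) x, sphericalHardy_norm_rpow μ hdp hx,
      ← hd_def, hdq, div_div_cancel₀ hd.ne', ENNReal.ofReal_mul hq.le]
  have hC₂ : ∀ᵐ y ∂μ,
      ∫⁻ x, sphericalHardyKernel μ x y * w x ^ p ∂μ ≤ ENNReal.ofReal q * w y ^ p := by
    filter_upwards [Measure.ae_ne μ 0] with y hy
    simp_rw [hw_p]
    rw [lintegral_sphericalHardyKernel_mul_left,
      setLIntegral_inv_addHaar_ball_mul_norm_rpow μ (by simp only [neg_lt_zero]; positivity) hy,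
      ← hd_def, neg_neg, div_div_cancel₀ hd.ne', ENNReal.ofReal_mul hq.le]
  have hw₀ : ∀ᵐ y ∂μ, w y ≠ 0 := by
    filter_upwards [Measure.ae_ne μ 0] with y hy
    simpa [w] using Real.rpow_pos_of_pos (norm_pos_iff.2 hy) _
  have hq_ne : ENNReal.ofReal q ≠ 0 := by simpa using hq
  calc ∫⁻ x, sphericalHardy μ f x ^ p ∂μ
      = ∫⁻ x, (∫⁻ y, sphericalHardyKernel μ x y * f y ∂μ) ^ p ∂μ := by
        simp_rw [lintegral_sphericalHardyKernel_mul μ hf]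
    _ ≤ ENNReal.ofReal q ^ (p / q) * ENNReal.ofReal q * ∫⁻ y, f y ^ p ∂μ :=
        lintegral_rpow_lintegral_mul_le_of_schur hpq (measurable_sphericalHardyKernel μ)
          (by fun_prop) (by fun_prop) hw₀ (.of_forall fun _ ↦ ofReal_ne_top) hC₁ hC₂ hf
    _ = ENNReal.ofReal q ^ p * ∫⁻ y, f y ^ p ∂μ := by
        nth_rewrite 2 [← ENNReal.rpow_one (ENNReal.ofReal q)]
        rw [← ENNReal.rpow_add _ _ hq_ne ofReal_ne_top, hpq.div_conj_eq_sub_one, sub_add_cancel]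

theorem lintegral_annularPower_rpow {p R : ℝ} (hp : 0 < p) (hR : 1 ≤ R) :
    ∫⁻ y, annularPower (-(finrank ℝ E / p)) R y ^ p ∂μ =
      μ (ball 0 1) * ENNReal.ofReal (finrank ℝ E * Real.log R) := by
  have hpow (y : E) : annularPower (-(finrank ℝ E / p)) R y ^ p =
      ((‖·‖) ⁻¹' Ioc 1 R).indicator (fun y ↦ ENNReal.ofReal (‖y‖ ^ (-(finrank ℝ E : ℝ)))) y := by
    by_cases hy : y ∈ (‖·‖) ⁻¹' Ioc 1 R
    · rw [annularPower, indicator_of_mem hy, indicator_of_mem hy,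
        ENNReal.ofReal_rpow_of_nonneg (by positivity) hp.le, ← Real.rpow_mul (norm_nonneg y),
        neg_mul, div_mul_cancel₀ _ hp.ne']
    · rw [annularPower, indicator_of_notMem hy, indicator_of_notMem hy,
        ENNReal.zero_rpow_of_pos hp]
  rw [lintegral_congr hpow,
    lintegral_indicator (measurableSet_preimage measurable_norm measurableSet_Ioc),
    setLIntegral_norm_preimage_Ioc_rpow_neg_finrank μ one_pos hR, div_one]

theorem sphericalHardy_annularPower {p q R : ℝ} (hpq : p.HolderConjugate q) {x : E}
    (hx₁ : 1 ≤ ‖x‖) (hxR : ‖x‖ ≤ R) :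
    sphericalHardy μ (annularPower (-(finrank ℝ E / p)) R) x =
      ENNReal.ofReal (q * (‖x‖ ^ (-(finrank ℝ E / p)) - ‖x‖ ^ (-(finrank ℝ E : ℝ)))) := by
  set d : ℝ := (finrank ℝ E : ℝ) with hd_def
  have hd : 0 < d := Nat.cast_pos.2 finrank_pos
  have hr : 0 < ‖x‖ := one_pos.trans_le hx₁
  have hshell : (‖·‖) ⁻¹' Ioc 1 R ∩ closedBall (0 : E) ‖x‖ = (‖·‖) ⁻¹' Ioc 1 ‖x‖ := by
    ext y
    simp only [mem_inter_iff, mem_preimage, mem_Ioc, mem_closedBall_zero_iff]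
    exact ⟨fun h ↦ ⟨h.1.1, h.2⟩, fun h ↦ ⟨⟨h.1, h.2.trans hxR⟩, h.2⟩⟩
  have hexp : d - 1 + -(d / p) = d / q - 1 := by
    rw [div_eq_mul_inv d q, ← hpq.one_sub_inv]; ring
  have hdq : d / q ≠ 0 := (div_pos hd hpq.symm.pos).ne'
  have hint : ∫ r in (1 : ℝ)..‖x‖, r ^ (d / q - 1) = (‖x‖ ^ (d / q) - 1) / (d / q) := by
    rw [integral_rpow (Or.inr ⟨by simpa using hdq, by simp [uIcc_of_le hx₁]⟩), sub_add_cancel,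
      Real.one_rpow]
  rw [sphericalHardy, annularPower, setLIntegral_indicator
      (measurableSet_preimage measurable_norm measurableSet_Ioc), hshell,
    setLIntegral_norm_preimage_Ioc_rpow μ one_pos hx₁, inv_addHaar_ball_zero μ hr,
    mul_mul_mul_comm, ENNReal.inv_mul_cancel (measure_ball_pos μ 0 one_pos).ne'
      measure_ball_lt_top.ne, one_mul, ← ENNReal.ofReal_mul (by positivity), ← hd_def, hexp, hint]
  congr 1
  have hpow : ‖x‖ ^ (-d) * ‖x‖ ^ (d / q) = ‖x‖ ^ (-(d / p)) := by
    rw [← Real.rpow_add hr]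
    congr 1
    linear_combination d * hpq.inv_add_inv_eq_one
  rw [← hpow]
  field_simp

theorem ofReal_mul_log_le_lintegral_sphericalHardy_annularPower {p q A R : ℝ}
    (hpq : p.HolderConjugate q) (hA : 1 ≤ A) (hAR : A ≤ R) :
    ENNReal.ofReal ((q * (1 - A ^ (-(finrank ℝ E / q)))) ^ p) *
        (μ (ball 0 1) * ENNReal.ofReal (finrank ℝ E * Real.log (R / A))) ≤
      ∫⁻ x, sphericalHardy μ (annularPower (-(finrank ℝ E / p)) R) x ^ p ∂μ := by
  set d : ℝ := (finrank ℝ E : ℝ) with hd_def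
  have hd : 0 < d := Nat.cast_pos.2 finrank_pos
  have hp := hpq.pos
  have hq := hpq.symm.pos
  set m := q * (1 - A ^ (-(d / q)))
  have hm : 0 ≤ m :=
    mul_nonneg hq.le (sub_nonneg.2 (Real.rpow_le_one_of_one_le_of_nonpos hA (by simp; positivity)))
  have hpointwise : ∀ x ∈ (‖·‖) ⁻¹' Ioc A R, ENNReal.ofReal (m ^ p) * ENNReal.ofReal (‖x‖ ^ (-d)) ≤
      sphericalHardy μ (annularPower (-(d / p)) R) x ^ p := by
    rintro x ⟨hAx, hxR⟩
    have hr : 0 < ‖x‖ := by linarith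
    have hsplit : ‖x‖ ^ (-d) = ‖x‖ ^ (-(d / p)) * ‖x‖ ^ (-(d / q)) := by
      rw [← Real.rpow_add hr]
      congr 1
      linear_combination d * hpq.inv_add_inv_eq_one
    have hreal : m * ‖x‖ ^ (-(d / p)) ≤ q * (‖x‖ ^ (-(d / p)) - ‖x‖ ^ (-d)) := by
      have hAx' : ‖x‖ ^ (-(d / q)) ≤ A ^ (-(d / q)) :=
        Real.rpow_le_rpow_of_nonpos (by linarith) hAx.le (by simp; positivity)
      calc m * ‖x‖ ^ (-(d / p)) = q * ‖x‖ ^ (-(d / p)) * (1 - A ^ (-(d / q))) := by ring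
        _ ≤ q * ‖x‖ ^ (-(d / p)) * (1 - ‖x‖ ^ (-(d / q))) := by gcongr
        _ = q * (‖x‖ ^ (-(d / p)) - ‖x‖ ^ (-d)) := by rw [hsplit]; ring
    rw [sphericalHardy_annularPower μ hpq (by linarith) hxR, ← hd_def]
    calc ENNReal.ofReal (m ^ p) * ENNReal.ofReal (‖x‖ ^ (-d))
        = ENNReal.ofReal (m * ‖x‖ ^ (-(d / p))) ^ p := by
          rw [ENNReal.ofReal_rpow_of_nonneg (by positivity) hp.le, Real.mul_rpow hm (by positivity),
            ← Real.rpow_mul hr.le, neg_mul, div_mul_cancel₀ _ hp.ne',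
            ENNReal.ofReal_mul (by positivity)]
      _ ≤ _ := ENNReal.rpow_le_rpow (ENNReal.ofReal_le_ofReal hreal) hp.le
  calc ENNReal.ofReal (m ^ p) * (μ (ball 0 1) * ENNReal.ofReal (d * Real.log (R / A)))
      = ∫⁻ x in (‖·‖) ⁻¹' Ioc A R, ENNReal.ofReal (m ^ p) * ENNReal.ofReal (‖x‖ ^ (-d)) ∂μ := by
        rw [lintegral_const_mul' _ _ ofReal_ne_top,
          setLIntegral_norm_preimage_Ioc_rpow_neg_finrank μ (by linarith) hAR]
    _ ≤ ∫⁻ x in (‖·‖) ⁻¹' Ioc A R, sphericalHardy μ (annularPower (-(d / p)) R) x ^ p ∂μ :=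
        setLIntegral_mono' (measurableSet_preimage measurable_norm measurableSet_Ioc) hpointwise
    _ ≤ _ := setLIntegral_le_lintegral _ _

theorem ofReal_rpow_mul_le_of_lintegral_sphericalHardy_rpow_le {p q : ℝ}
    (hpq : p.HolderConjugate q) {C : ℝ≥0∞} (hC : ∀ f : E → ℝ≥0∞, Measurable f →
      ∫⁻ y, f y ^ p ∂μ < ∞ → ∫⁻ x, sphericalHardy μ f x ^ p ∂μ ≤ C ^ p * ∫⁻ y, f y ^ p ∂μ)
    {t : ℝ} (ht : 1 < t) :
    ENNReal.ofReal ((q * (1 - t ^ (-(finrank ℝ E / q)))) ^ p * ((t - 1) / t)) ≤ C ^ p := by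
  set d : ℝ := (finrank ℝ E : ℝ)
  have hd : 0 < d := Nat.cast_pos.2 finrank_pos
  have ht₀ : 0 < t := one_pos.trans ht
  have htt : t ≤ t ^ t := Real.self_le_rpow_of_one_le ht.le ht.le
  have hf : Measurable (annularPower (-(d / p)) (t ^ t) : E → ℝ≥0∞) :=
    (by fun_prop : Measurable fun y : E ↦ ENNReal.ofReal (‖y‖ ^ (-(d / p)))).indicator
      (measurableSet_preimage measurable_norm measurableSet_Ioc)
  have hnorm := lintegral_annularPower_rpow μ hpq.pos (ht.le.trans htt)
  have hlow := ofReal_mul_log_le_lintegral_sphericalHardy_annularPower μ hpq ht.le htt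
  have hup := hC _ hf (by rw [hnorm]; exact mul_lt_top measure_ball_lt_top ofReal_lt_top)
  rw [hnorm, Real.log_rpow ht₀] at hup
  rw [← Real.rpow_sub_one ht₀.ne', Real.log_rpow ht₀] at hlow
  set X := μ (ball 0 1) * ENNReal.ofReal (d * Real.log t)
  have hX₀ : X ≠ 0 := mul_ne_zero (measure_ball_pos μ 0 one_pos).ne'
    (by simpa using mul_pos hd (Real.log_pos ht))
  have hX_top : X ≠ ∞ := mul_ne_top measure_ball_lt_top.ne ofReal_ne_top
  have hcancel : ENNReal.ofReal ((q * (1 - t ^ (-(d / q)))) ^ p) * ENNReal.ofReal (t - 1) * X ≤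
      C ^ p * ENNReal.ofReal t * X := by
    calc ENNReal.ofReal ((q * (1 - t ^ (-(d / q)))) ^ p) * ENNReal.ofReal (t - 1) * X
        = ENNReal.ofReal ((q * (1 - t ^ (-(d / q)))) ^ p) *
            (μ (ball 0 1) * ENNReal.ofReal (d * ((t - 1) * Real.log t))) := by
          rw [show d * ((t - 1) * Real.log t) = (t - 1) * (d * Real.log t) by ring,
            ENNReal.ofReal_mul (by linarith)]
          ring
      _ ≤ C ^ p * (μ (ball 0 1) * ENNReal.ofReal (d * (t * Real.log t))) := hlow.trans hup
      _ = C ^ p * ENNReal.ofReal t * X := by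
          rw [show d * (t * Real.log t) = t * (d * Real.log t) by ring,
            ENNReal.ofReal_mul ht₀.le]
          ring
  rw [← mul_div_assoc, ENNReal.ofReal_div_of_pos ht₀, ENNReal.ofReal_mul' (by linarith)]
  exact ENNReal.div_le_of_le_mul ((ENNReal.mul_le_mul_iff_left hX₀ hX_top).1 hcancel)

theorem ofReal_le_of_lintegral_sphericalHardy_rpow_le {p q : ℝ} (hpq : p.HolderConjugate q)
    {C : ℝ≥0∞} (hC : ∀ f : E → ℝ≥0∞, Measurable f → ∫⁻ y, f y ^ p ∂μ < ∞ →
      ∫⁻ x, sphericalHardy μ f x ^ p ∂μ ≤ C ^ p * ∫⁻ y, f y ^ p ∂μ) :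
    ENNReal.ofReal q ≤ C := by
  have hp := hpq.pos
  have h₁ : Tendsto (fun t : ℝ ↦ t ^ (-(finrank ℝ E / q))) atTop (𝓝 0) :=
    tendsto_rpow_neg_atTop (div_pos (Nat.cast_pos.2 finrank_pos) hpq.symm.pos)
  have h₂ : Tendsto (fun t : ℝ ↦ (t - 1) / t) atTop (𝓝 1) := by
    have : Tendsto (fun t : ℝ ↦ 1 - t⁻¹) atTop (𝓝 (1 - 0)) := tendsto_inv_atTop_zero.const_sub 1
    refine (sub_zero (1 : ℝ) ▸ this).congr' ?_
    filter_upwards [eventually_ne_atTop 0] with t ht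
    field_simp
  have hlim : Tendsto (fun t : ℝ ↦ (q * (1 - t ^ (-(finrank ℝ E / q)))) ^ p * ((t - 1) / t))
      atTop (𝓝 (q ^ p)) := by
    simpa using (((h₁.const_sub 1).const_mul q).rpow_const (Or.inr hp.le)).mul h₂
  rw [← ENNReal.rpow_le_rpow_iff hp, ENNReal.ofReal_rpow_of_nonneg hpq.symm.pos.le hp.le]
  exact le_of_tendsto (ENNReal.tendsto_ofReal hlim) ((eventually_gt_atTop 1).mono fun t ht ↦
    ofReal_rpow_mul_le_of_lintegral_sphericalHardy_rpow_le μ hpq hC ht)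

end AddHaar

/-- The `n`-dimensional spherical Hardy operator
`𝓗f(x) = (1/(ν_n |x|ⁿ)) ∫_{|y| ≤ |x|} f(y) dy` (where `ν_n |x|ⁿ` is the volume of the ball
of radius `|x|`) satisfies `‖𝓗f‖_{L^p} ≤ (p/(p-1)) ‖f‖_{L^p}` for nonnegative measurable `f`,
and the constant `p/(p-1)` is exactly its operator norm, independently of the dimension. -/
theorem spherical_hardy_norm (n : ℕ) (hn : 1 ≤ n) (p : ℝ) (hp : 1 < p) :
    (∀ f : EuclideanSpace ℝ (Fin n) → ℝ≥0∞, Measurable f →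
      (∫⁻ x : EuclideanSpace ℝ (Fin n),
          ((volume (ball (0 : EuclideanSpace ℝ (Fin n)) ‖x‖))⁻¹ *
            ∫⁻ y in closedBall (0 : EuclideanSpace ℝ (Fin n)) ‖x‖, f y) ^ p) ^ (1 / p)
        ≤ ENNReal.ofReal (p / (p - 1)) *
          (∫⁻ y : EuclideanSpace ℝ (Fin n), (f y) ^ p) ^ (1 / p)) ∧
    (∀ C : ℝ≥0∞,
      (∀ f : EuclideanSpace ℝ (Fin n) → ℝ≥0∞, Measurable f →
        (∫⁻ y : EuclideanSpace ℝ (Fin n), (f y) ^ p) ^ (1 / p) < ⊤ →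
        (∫⁻ x : EuclideanSpace ℝ (Fin n),
            ((volume (ball (0 : EuclideanSpace ℝ (Fin n)) ‖x‖))⁻¹ *
              ∫⁻ y in closedBall (0 : EuclideanSpace ℝ (Fin n)) ‖x‖, f y) ^ p) ^ (1 / p)
          ≤ C * (∫⁻ y : EuclideanSpace ℝ (Fin n), (f y) ^ p) ^ (1 / p)) →
      ENNReal.ofReal (p / (p - 1)) ≤ C) := by
  have : Nonempty (Fin n) := ⟨⟨0, hn⟩⟩
  have hpq : p.HolderConjugate (p / (p - 1)) := .conjExponent hp
  have hp₀ : 0 < p := hpq.pos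
  refine ⟨fun f hf ↦ ?_, fun C hC ↦ ?_⟩
  · rw [ENNReal.rpow_one_div_le_mul_rpow_one_div_iff hp₀]
    exact lintegral_sphericalHardy_rpow_le (volume : Measure (EuclideanSpace ℝ (Fin n))) hpq hf
  · refine ofReal_le_of_lintegral_sphericalHardy_rpow_le
      (volume : Measure (EuclideanSpace ℝ (Fin n))) hpq fun f hf hfin ↦ ?_
    rw [← ENNReal.rpow_one_div_le_mul_rpow_one_div_iff hp₀]
    exact hC f hf (ENNReal.rpow_lt_top_of_nonneg (by positivity) hfin.ne)
end

section
/- Let 0 < β < n. The fractional Hardy operator H_β f(x) = |B(0,|x|)|^{β/n - 1} ∫_{|y| ≤ |x|} f(y) dy maps L¹(ℝⁿ) to weak L^{n/(n-β)}(ℝⁿ) with operator norm exactly 1; that is, for all f ∈ L¹(ℝⁿ) and λ > 0, |{x : |H_β f(x)| > λ}| ≤ (‖f‖_{L¹}/λ)^{n/(n-β)}, and this bound is sharp. -/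
/-!
Since `|B(0,r)|` increases with `r`, the pointwise bound
`|H_β f(x)| ≤ |B(0,|x|)|^{-(n-β)/n} ‖f‖₁` confines `{|H_β f| > λ}` to the ball `B` with
`|B| = (‖f‖₁/λ)^{n/(n-β)}`. Conversely, if `f` vanishes outside the unit ball then
`H_β f(x) = |B(0,|x|)|^{-(n-β)/n} ∫ f` for `|x| ≥ 1`, so at height
`λ_R = |B(0,R)|^{-(n-β)/n} |∫ f|` the level set contains the annulus `1 ≤ |x| < R`, and
`λ_R |annulus|^{(n-β)/n} = |∫ f| (1 - |B(0,1)|/|B(0,R)|)^{(n-β)/n} → |∫ f|` as `R → ∞`.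
Taking `f = 1_{B(0,1)}` shows that the constant `1` cannot be improved.
-/

open MeasureTheory Set ENNReal Metric

/-- The fractional Hardy operator `H_β f(x) = |B(0,|x|)|^{β/n - 1} ∫_{|y|≤|x|} f(y) dy`. -/
noncomputable def fracHardy (n : ℕ) (β : ℝ) (f : EuclideanSpace ℝ (Fin n) → ℝ)
    (x : EuclideanSpace ℝ (Fin n)) : ℝ :=
  (volume (ball (0 : EuclideanSpace ℝ (Fin n)) ‖x‖)).toReal ^ (β / n - 1) *
    ∫ y in closedBall (0 : EuclideanSpace ℝ (Fin n)) ‖x‖, f y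

/-- The weak `L^{n/(n-β)}` quasinorm `sup_{λ>0} λ |{|g| > λ}|^{(n-β)/n}`. -/
noncomputable def weakNorm (n : ℕ) (β : ℝ) (g : EuclideanSpace ℝ (Fin n) → ℝ) : ℝ≥0∞ :=
  ⨆ (lam : ℝ) (_ : 0 < lam),
    ENNReal.ofReal lam * (volume {x : EuclideanSpace ℝ (Fin n) | lam < |g x|}) ^ ((n - β) / n)

open Filter Topology Module

theorem Real.lt_rpow_inv_of_lt_rpow_neg_mul {a b lam q : ℝ} (ha : 0 ≤ a) (hq : 0 < q)
    (hlam : 0 < lam) (h : lam < a ^ (-q) * b) : a < (b / lam) ^ q⁻¹ := by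
  have ha' : 0 < a := by
    refine ha.lt_of_ne fun ha0 => ?_
    rw [← ha0, Real.zero_rpow (neg_ne_zero.2 hq.ne'), zero_mul] at h
    exact hlam.not_gt h
  rw [Real.rpow_neg ha, ← div_eq_inv_mul, lt_div_iff₀ (by positivity), ← lt_div_iff₀' hlam] at h
  exact (Real.lt_rpow_inv_iff_of_pos ha (h.le.trans' (by positivity)) hq).2 h

theorem measureReal_ball_pos {X : Type*} [PseudoMetricSpace X] [ProperSpace X] [MeasurableSpace X]
    (μ : Measure X) [μ.IsOpenPosMeasure] [IsFiniteMeasureOnCompacts μ] (x : X) {r : ℝ}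
    (hr : 0 < r) : 0 < μ.real (ball x r) :=
  ENNReal.toReal_pos (measure_ball_pos μ x hr).ne' measure_ball_lt_top.ne

section HaarBall

variable {E : Type*} [NormedAddCommGroup E] [NormedSpace ℝ E] [MeasurableSpace E] [BorelSpace E]
  [FiniteDimensional ℝ E] [Nontrivial E] (μ : Measure E) [μ.IsAddHaarMeasure]

theorem MeasureTheory.Measure.addHaar_real_ball (x : E) {r : ℝ} (hr : 0 ≤ r) :
    μ.real (ball x r) = r ^ finrank ℝ E * μ.real (ball 0 1) := by
  rw [← Measure.addHaar_real_closedBall_eq_addHaar_real_ball,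
    Measure.addHaar_real_closedBall μ x hr]

theorem MeasureTheory.Measure.tendsto_addHaar_real_ball_atTop (x : E) :
    Tendsto (fun r => μ.real (ball x r)) atTop atTop := by
  refine ((tendsto_pow_atTop (finrank_pos (R := ℝ) (M := E)).ne').atTop_mul_const
    (measureReal_ball_pos μ 0 one_pos)).congr' ?_
  filter_upwards [eventually_ge_atTop 0] with r hr using (Measure.addHaar_real_ball μ x hr).symm

theorem measure_setOf_measureReal_ball_norm_lt_le (c : ℝ) :
    μ {x : E | μ.real (ball 0 ‖x‖) < c} ≤ ENNReal.ofReal c := by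
  rcases le_or_gt c 0 with hc | hc
  · have : {x : E | μ.real (ball (0 : E) ‖x‖) < c} = ∅ :=
      eq_empty_of_forall_notMem fun x hx => measureReal_nonneg.not_gt (lt_of_lt_of_le hx hc)
    simp [this]
  set V := μ.real (ball (0 : E) 1)
  have hV : 0 < V := measureReal_ball_pos μ 0 one_pos
  set R := (c / V) ^ ((finrank ℝ E : ℝ)⁻¹)
  have hR : R ^ finrank ℝ E * V = c := by
    rw [Real.rpow_inv_natCast_pow (div_nonneg hc.le hV.le) finrank_pos.ne',
      div_mul_cancel₀ _ hV.ne']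
  calc μ {x : E | μ.real (ball 0 ‖x‖) < c} ≤ μ (ball 0 R) := measure_mono fun x hx => by
        rw [mem_ofPred_eq, Measure.addHaar_real_ball μ 0 (norm_nonneg x), ← hR] at hx
        exact mem_ball_zero_iff.2 <|
          lt_of_pow_lt_pow_left₀ _ (by positivity) (lt_of_mul_lt_mul_right hx hV.le)
    _ = ENNReal.ofReal c := by
        rw [← ofReal_measureReal measure_ball_lt_top.ne,
          Measure.addHaar_real_ball μ 0 (by positivity), hR]

end HaarBall

section FracHardy

variable {n : ℕ} {β : ℝ}

theorem abs_fracHardy_le {f : EuclideanSpace ℝ (Fin n) → ℝ} (hf : Integrable f)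
    (x : EuclideanSpace ℝ (Fin n)) :
    |fracHardy n β f x| ≤ volume.real (ball (0 : EuclideanSpace ℝ (Fin n)) ‖x‖) ^ (β / n - 1)
      * ∫ y, |f y| := by
  rw [fracHardy, ← measureReal_def, abs_mul, abs_of_nonneg (by positivity)]
  gcongr
  calc |∫ y in closedBall 0 ‖x‖, f y| ≤ ∫ y in closedBall 0 ‖x‖, |f y| :=
        abs_integral_le_integral_abs
    _ ≤ ∫ y, |f y| := setIntegral_le_integral hf.abs (.of_forall fun _ => abs_nonneg _)

theorem fracHardy_eq_of_forall_notMem_closedBall {f : EuclideanSpace ℝ (Fin n) → ℝ} {r : ℝ}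
    (hf : ∀ y ∉ closedBall 0 r, f y = 0) {x : EuclideanSpace ℝ (Fin n)} (hx : r ≤ ‖x‖) :
    fracHardy n β f x
      = volume.real (ball (0 : EuclideanSpace ℝ (Fin n)) ‖x‖) ^ (β / n - 1) * ∫ y, f y := by
  rw [fracHardy, ← measureReal_def, setIntegral_eq_integral_of_forall_compl_eq_zero]
  exact fun y hy => hf y fun hyr => hy (closedBall_subset_closedBall hx hyr)

theorem ofReal_mul_volume_rpow_le_weakNorm (hβn : β ≤ n) {g : EuclideanSpace ℝ (Fin n) → ℝ}
    {lam : ℝ} (hlam : 0 < lam) {S : Set (EuclideanSpace ℝ (Fin n))}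
    (hS : S ⊆ {x | lam < |g x|}) :
    ENNReal.ofReal lam * volume S ^ ((n - β) / n) ≤ weakNorm n β g := by
  refine le_trans ?_ (le_iSup₂ (f := fun l (_ : 0 < l) => ENNReal.ofReal l *
    volume {x : EuclideanSpace ℝ (Fin n) | l < |g x|} ^ ((n - β) / n)) lam hlam)
  gcongr

theorem volume_lt_abs_fracHardy_le (hn : 1 ≤ n) (hβn : β < n)
    {f : EuclideanSpace ℝ (Fin n) → ℝ} (hf : Integrable f) {lam : ℝ} (hlam : 0 < lam) :
    volume {x : EuclideanSpace ℝ (Fin n) | lam < |fracHardy n β f x|}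
      ≤ ENNReal.ofReal ((∫ y, |f y|) / lam) ^ ((n : ℝ) / (n - β)) := by
  have : Nonempty (Fin n) := ⟨⟨0, hn⟩⟩
  have hn₀ : (0 : ℝ) < n := by exact_mod_cast hn
  have hq : 0 < ((n : ℝ) - β) / n := div_pos (sub_pos.2 hβn) hn₀
  have hexp : β / n - 1 = -(((n : ℝ) - β) / n) := by rw [div_sub_one hn₀.ne', ← neg_sub, neg_div]
  calc volume {x : EuclideanSpace ℝ (Fin n) | lam < |fracHardy n β f x|}
      ≤ volume {x : EuclideanSpace ℝ (Fin n) | volume.real (ball 0 ‖x‖)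
          < ((∫ y, |f y|) / lam) ^ (((n : ℝ) - β) / n)⁻¹} :=
        measure_mono fun x hx => Real.lt_rpow_inv_of_lt_rpow_neg_mul measureReal_nonneg hq hlam
          (hexp ▸ hx.trans_le (abs_fracHardy_le hf x))
    _ ≤ _ := measure_setOf_measureReal_ball_norm_lt_le volume _
    _ = _ := by
        rw [ENNReal.ofReal_rpow_of_nonneg (by positivity) (by positivity), inv_div]

theorem ofReal_mul_one_sub_rpow_le_weakNorm_fracHardy (hn : 1 ≤ n) (hβn : β < n)
    {f : EuclideanSpace ℝ (Fin n) → ℝ} (hf : ∀ y ∉ closedBall 0 1, f y = 0) {R : ℝ}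
    (hR : 1 < R) :
    ENNReal.ofReal (|∫ y, f y| * (1 - volume.real (ball (0 : EuclideanSpace ℝ (Fin n)) 1)
      / volume.real (ball (0 : EuclideanSpace ℝ (Fin n)) R)) ^ (((n : ℝ) - β) / n))
      ≤ weakNorm n β (fracHardy n β f) := by
  have : Nonempty (Fin n) := ⟨⟨0, hn⟩⟩
  have hn₀ : (0 : ℝ) < n := by exact_mod_cast hn
  set q : ℝ := ((n : ℝ) - β) / n
  set I := |∫ y, f y|
  set V : ℝ → ℝ := fun r => volume.real (ball (0 : EuclideanSpace ℝ (Fin n)) r)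
  have hq : 0 < q := div_pos (sub_pos.2 hβn) hn₀
  have hV : ∀ r, 0 ≤ r → V r = r ^ n * V 1 := fun r hr => by
    simpa only [finrank_euclideanSpace_fin] using
      Measure.addHaar_real_ball (volume : Measure (EuclideanSpace ℝ (Fin n))) 0 hr
  have hV₁ : 0 < V 1 := measureReal_ball_pos volume 0 one_pos
  have hVR : 0 < V R := measureReal_ball_pos volume 0 (by linarith)
  rcases (abs_nonneg (∫ y, f y)).eq_or_lt with hI | hI
  · simp [I, ← hI]
  have hsub : ball 0 R \ ball 0 1 ⊆ {x | V R ^ (-q) * I < |fracHardy n β f x|} := by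
    rintro x ⟨hxR, hx1⟩
    rw [mem_ball_zero_iff] at hxR
    rw [mem_ball_zero_iff, not_lt] at hx1
    have hx₀ : 0 < ‖x‖ := by linarith
    have hVx : V ‖x‖ < V R := by rw [hV ‖x‖ hx₀.le, hV R (by linarith)]; gcongr
    rw [mem_ofPred_eq, fracHardy_eq_of_forall_notMem_closedBall hf hx1, abs_mul,
      abs_of_nonneg (by positivity), div_sub_one hn₀.ne', ← neg_sub, neg_div]
    exact mul_lt_mul_of_pos_right (Real.rpow_lt_rpow_of_neg
      (measureReal_ball_pos volume 0 hx₀) hVx (neg_lt_zero.2 hq)) hI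
  have hann : volume.real (ball (0 : EuclideanSpace ℝ (Fin n)) R \ ball 0 1) = V R - V 1 :=
    measureReal_sdiff (ball_subset_ball hR.le) measurableSet_ball
  calc ENNReal.ofReal (I * (1 - V 1 / V R) ^ q)
      = ENNReal.ofReal (V R ^ (-q) * I) * volume (ball 0 R \ ball 0 1) ^ q := by
        rw [← ofReal_measureReal (measure_ne_top_of_subset sdiff_subset measure_ball_lt_top.ne),
          hann, ENNReal.ofReal_rpow_of_nonneg (hann ▸ measureReal_nonneg) hq.le,
          ← ENNReal.ofReal_mul (by positivity), one_sub_div hVR.ne',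
          Real.div_rpow (hann ▸ measureReal_nonneg) hVR.le, Real.rpow_neg hVR.le]
        ring_nf
    _ ≤ _ := ofReal_mul_volume_rpow_le_weakNorm hβn.le (by positivity) hsub

theorem ofReal_abs_integral_le_weakNorm_fracHardy (hn : 1 ≤ n) (hβn : β < n)
    {f : EuclideanSpace ℝ (Fin n) → ℝ} (hf : ∀ y ∉ closedBall 0 1, f y = 0) :
    ENNReal.ofReal |∫ y, f y| ≤ weakNorm n β (fracHardy n β f) := by
  have : Nonempty (Fin n) := ⟨⟨0, hn⟩⟩
  set V : ℝ → ℝ := fun r => volume.real (ball (0 : EuclideanSpace ℝ (Fin n)) r)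
  have hratio : Tendsto (fun R => V 1 / V R) atTop (𝓝 0) :=
    tendsto_const_nhds.div_atTop (Measure.tendsto_addHaar_real_ball_atTop _ 0)
  have hlim := ((hratio.const_sub 1).rpow_const (p := ((n : ℝ) - β) / n)
    (.inl (by norm_num))).const_mul |∫ y, f y|
  simp only [sub_zero, Real.one_rpow, mul_one] at hlim
  exact le_of_tendsto (ENNReal.tendsto_ofReal hlim) <| (eventually_gt_atTop 1).mono
    fun R hR => ofReal_mul_one_sub_rpow_le_weakNorm_fracHardy hn hβn hf hR

end FracHardy

theorem fracHardy_weak_type_general (n : ℕ) (hn : 1 ≤ n) (β : ℝ) (hβn : β < n) :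
    (∀ f : EuclideanSpace ℝ (Fin n) → ℝ, Integrable f → ∀ lam : ℝ, 0 < lam →
      volume {x : EuclideanSpace ℝ (Fin n) | lam < |fracHardy n β f x|}
        ≤ ENNReal.ofReal ((∫ y, |f y|) / lam) ^ ((n : ℝ) / (n - β))) ∧
    (∀ C : ℝ≥0∞,
      (∀ f : EuclideanSpace ℝ (Fin n) → ℝ, Integrable f →
        weakNorm n β (fracHardy n β f) ≤ C * ENNReal.ofReal (∫ y, |f y|)) →
      1 ≤ C) := by
  refine ⟨fun f hf lam hlam => volume_lt_abs_fracHardy_le hn hβn hf hlam, fun C hC => ?_⟩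
  have : Nonempty (Fin n) := ⟨⟨0, hn⟩⟩
  set B := closedBall (0 : EuclideanSpace ℝ (Fin n)) 1
  set f : EuclideanSpace ℝ (Fin n) → ℝ := B.indicator 1
  have hf : Integrable f := (integrable_indicator_iff measurableSet_closedBall).2
    (integrableOn_const (C := (1 : ℝ)) measure_closedBall_lt_top.ne)
  have hI : 0 < ∫ y, f y := by
    rw [integral_indicator_one measurableSet_closedBall,
      Measure.addHaar_real_closedBall_eq_addHaar_real_ball]
    exact measureReal_ball_pos volume 0 one_pos
  have hf_abs : (fun y => |f y|) = f :=
    funext fun y => abs_of_nonneg (indicator_nonneg (fun _ _ => zero_le_one) y)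
  have := (ofReal_abs_integral_le_weakNorm_fracHardy hn hβn (f := f)
    (fun y hy => indicator_of_notMem hy _)).trans (hC f hf)
  rw [hf_abs, abs_of_pos hI] at this
  exact (ENNReal.mul_le_mul_iff_left (ENNReal.ofReal_pos.2 hI).ne' ofReal_ne_top).1
    (by rwa [one_mul])

/-- For `0 < β < n`, the fractional Hardy operator maps `L¹(ℝⁿ)` to weak `L^{n/(n-β)}(ℝⁿ)`:
`|{x : |H_β f(x)| > λ}| ≤ (‖f‖₁/λ)^{n/(n-β)}` for all `λ > 0`, and the operator norm from
`L¹` to `L^{n/(n-β),∞}` is exactly `1`. -/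
theorem fracHardy_weak_type (n : ℕ) (hn : 1 ≤ n) (β : ℝ) (hβ₀ : 0 < β) (hβn : β < n) :
    (∀ f : EuclideanSpace ℝ (Fin n) → ℝ, Integrable f → ∀ lam : ℝ, 0 < lam →
      volume {x : EuclideanSpace ℝ (Fin n) | lam < |fracHardy n β f x|}
        ≤ ENNReal.ofReal ((∫ y, |f y|) / lam) ^ ((n : ℝ) / (n - β))) ∧
    (∀ C : ℝ≥0∞,
      (∀ f : EuclideanSpace ℝ (Fin n) → ℝ, Integrable f →
        weakNorm n β (fracHardy n β f) ≤ C * ENNReal.ofReal (∫ y, |f y|)) →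
      1 ≤ C) :=
  fracHardy_weak_type_general n hn β hβn
end

section
/- For 1 < p < ∞, f a nonnegative radial function on ℝⁿ with f(x) = F(|x|), the spherical Hardy operator admits the pointwise representation 𝓗f(x) = (1/ν_n) ∫_{B(0,1)} F(|x||y|) dy, and consequently by Minkowski's integral inequality ‖𝓗f‖_{L^p(ℝⁿ)} ≤ (1/ν_n) ∫_{B(0,1)} |y|^{-n/p} dy · ‖f‖_{L^p(ℝⁿ)} = (p/(p-1)) ‖f‖_{L^p(ℝⁿ)}. -/
open MeasureTheory Set ENNReal Metric

/-!
Rescaling `y ↦ ‖x‖ • y` turns the ball average defining `𝓗f(x)` into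
`ν_n⁻¹ ∫_B F(‖x‖ ‖y‖) dy`. For the `L^p` bound (a Schur test), write
`F(‖x‖‖y‖) = (F(‖x‖‖y‖) ‖y‖^a) · ‖y‖^(-a)` with `a = n/(pq)` and apply Hölder in `y`; then
Tonelli and `∫ F(‖y‖‖x‖)^p dx = ‖y‖^(-n) ∫ F(‖x‖)^p dx` leave exactly the constant
`J = ∫_B ‖y‖^(-n/p) dy` of Minkowski's integral inequality. Polar coordinates give
`J = ν_n · n/(n - n/p) = ν_n · p/(p-1)`.
-/

open Module

theorem lintegral_rpow_le_mul_of_mul_eq_one {α : Type*} [MeasurableSpace α] {μ : Measure α}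
    {p q : ℝ} (hpq : p.HolderConjugate q) {f u v : α → ℝ≥0∞} (hf : AEMeasurable f μ)
    (hu : AEMeasurable u μ) (hv : AEMeasurable v μ) (huv : ∀ᵐ x ∂μ, u x * v x = 1) :
    (∫⁻ x, f x ∂μ) ^ p ≤ (∫⁻ x, (f x * u x) ^ p ∂μ) * (∫⁻ x, v x ^ q ∂μ) ^ (p / q) := by
  have holder := ENNReal.lintegral_mul_le_Lp_mul_Lq μ hpq (hf.mul hu) hv
  have hf_eq : ∫⁻ x, f x ∂μ = ∫⁻ x, ((fun x ↦ f x * u x) * v) x ∂μ :=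
    lintegral_congr_ae <| huv.mono fun x hx ↦ by simp [mul_assoc, hx]
  calc (∫⁻ x, f x ∂μ) ^ p
      ≤ ((∫⁻ x, (f x * u x) ^ p ∂μ) ^ (1 / p) * (∫⁻ x, v x ^ q ∂μ) ^ (1 / q)) ^ p := by
        rw [hf_eq]; exact ENNReal.rpow_le_rpow holder hpq.nonneg
    _ = (∫⁻ x, (f x * u x) ^ p ∂μ) * (∫⁻ x, v x ^ q ∂μ) ^ (p / q) := by
        rw [ENNReal.mul_rpow_of_nonneg _ _ hpq.nonneg, ← ENNReal.rpow_mul, ← ENNReal.rpow_mul,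
          one_div_mul_cancel hpq.ne_zero, ENNReal.rpow_one, one_div_mul_eq_div]

theorem lintegral_const_mul_rpow_rpow_one_div {α : Type*} [MeasurableSpace α] {μ : Measure α}
    {p : ℝ} (hp : 0 < p) {c : ℝ≥0∞} (hc : c ≠ ∞) (f : α → ℝ≥0∞) :
    (∫⁻ x, (c * f x) ^ p ∂μ) ^ (1 / p) = c * (∫⁻ x, f x ^ p ∂μ) ^ (1 / p) := by
  simp_rw [ENNReal.mul_rpow_of_nonneg _ _ hp.le]
  rw [lintegral_const_mul' _ _ (ENNReal.rpow_ne_top_of_nonneg hp.le hc),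
    ENNReal.mul_rpow_of_nonneg _ _ (by positivity), ← ENNReal.rpow_mul, mul_one_div_cancel hp.ne',
    ENNReal.rpow_one]

theorem lintegral_Ioo_zero_one_rpow {s : ℝ} (hs : -1 < s) :
    ∫⁻ r in Ioo (0 : ℝ) 1, ENNReal.ofReal (r ^ s) = ENNReal.ofReal (1 / (s + 1)) := by
  have hint : IntegrableOn (fun r : ℝ ↦ r ^ s) (Ioo 0 1) :=
    (intervalIntegral.intervalIntegrable_rpow' hs).1.mono_set Ioo_subset_Ioc_self
  rw [← ofReal_integral_eq_lintegral_ofReal hint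
    ((ae_restrict_mem measurableSet_Ioo).mono fun r hr ↦ Real.rpow_nonneg hr.1.le s),
    ← integral_Ioc_eq_integral_Ioo, ← intervalIntegral.integral_of_le zero_le_one,
    integral_rpow (.inl hs), Real.one_rpow, Real.zero_rpow (by linarith), sub_zero, one_div]

section AddHaar

variable {E : Type*} [NormedAddCommGroup E] [NormedSpace ℝ E] [MeasurableSpace E] [BorelSpace E]
  [FiniteDimensional ℝ E] (μ : Measure E) [μ.IsAddHaarMeasure]

theorem lintegral_comp_smul_of_pos (f : E → ℝ≥0∞) {R : ℝ} (hR : 0 < R) :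
    ∫⁻ x, f (R • x) ∂μ = ENNReal.ofReal ((R ^ finrank ℝ E)⁻¹) * ∫⁻ x, f x ∂μ := by
  have h := lintegral_map_equiv f (Homeomorph.smulOfNeZero R hR.ne').toMeasurableEquiv (μ := μ)
  change ∫⁻ x, f x ∂μ.map (R • ·) = ∫⁻ x, f (R • x) ∂μ at h
  rw [← h, Measure.map_addHaar_smul μ hR.ne', lintegral_smul_measure, smul_eq_mul,
    abs_of_pos (by positivity)]

theorem setLIntegral_ball_eq_mul_setLIntegral_unitBall (g : E → ℝ≥0∞) {R : ℝ} (hR : 0 < R) :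
    ∫⁻ y in ball 0 R, g y ∂μ
      = ENNReal.ofReal (R ^ finrank ℝ E) * ∫⁻ y in ball 0 1, g (R • y) ∂μ := by
  have key := lintegral_comp_smul_of_pos μ ((ball 0 1).indicator fun y ↦ g (R • y)) (inv_pos.2 hR)
  rw [inv_pow, inv_inv, lintegral_indicator measurableSet_ball] at key
  rw [← key, ← lintegral_indicator measurableSet_ball]
  congr 1 with x
  by_cases hx : ‖x‖ < R
  · rw [indicator_of_mem (mem_ball_zero_iff.2 hx), indicator_of_mem]
    · simp [smul_smul, hR.ne']
    · simpa [norm_smul, abs_of_pos hR, inv_mul_lt_iff₀ hR] using hx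
  · rw [indicator_of_notMem (by simpa using hx), indicator_of_notMem]
    simpa [norm_smul, abs_of_pos hR, inv_mul_lt_iff₀ hR] using hx

theorem inv_measure_ball_mul_setLIntegral_closedBall (g : E → ℝ≥0∞) {R : ℝ} (hR : 0 < R) :
    (μ (ball 0 R))⁻¹ * ∫⁻ y in closedBall 0 R, g y ∂μ
      = (μ (ball 0 1))⁻¹ * ∫⁻ y in ball 0 1, g (R • y) ∂μ := by
  have hsphere : closedBall (0 : E) R =ᵐ[μ] ball 0 R := ae_eq_set.2
    ⟨by rw [closedBall_sdiff_ball]; exact Measure.addHaar_sphere_of_ne_zero μ 0 hR.ne',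
      by rw [sdiff_eq_empty.2 ball_subset_closedBall, measure_empty]⟩
  have hRd : ENNReal.ofReal (R ^ finrank ℝ E) ≠ 0 := by positivity
  rw [Measure.restrict_congr_set hsphere, setLIntegral_ball_eq_mul_setLIntegral_unitBall μ g hR,
    Measure.addHaar_ball_of_pos μ 0 hR, ENNReal.mul_inv (.inl hRd) (.inl ofReal_ne_top),
    mul_mul_mul_comm, ENNReal.inv_mul_cancel hRd ofReal_ne_top, one_mul]

theorem lintegral_comp_mul_norm (G : ℝ → ℝ≥0∞) {t : ℝ} (ht : 0 < t) :
    ∫⁻ x, G (t * ‖x‖) ∂μ = ENNReal.ofReal ((t ^ finrank ℝ E)⁻¹) * ∫⁻ x, G ‖x‖ ∂μ := by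
  simpa [norm_smul, abs_of_pos ht] using lintegral_comp_smul_of_pos μ (fun x ↦ G ‖x‖) ht

theorem inv_measure_ball_mul_setLIntegral_closedBall_comp_norm (F : ℝ → ℝ≥0∞) {x : E}
    (hx : x ≠ 0) :
    (μ (ball 0 ‖x‖))⁻¹ * ∫⁻ y in closedBall 0 ‖x‖, F ‖y‖ ∂μ
      = (μ (ball 0 1))⁻¹ * ∫⁻ y in ball 0 1, F (‖x‖ * ‖y‖) ∂μ := by
  simpa [norm_smul] using
    inv_measure_ball_mul_setLIntegral_closedBall μ (fun y ↦ F ‖y‖) (norm_pos_iff.2 hx)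

variable [Nontrivial E]

theorem lintegral_lintegral_unitBall_comp_mul_norm {G : ℝ → ℝ≥0∞} (hG : Measurable G)
    {w : E → ℝ≥0∞} (hw : Measurable w) :
    ∫⁻ x, ∫⁻ y in ball 0 1, G (‖x‖ * ‖y‖) * w y ∂μ ∂μ
      = (∫⁻ y in ball 0 1, ENNReal.ofReal ((‖y‖ ^ finrank ℝ E)⁻¹) * w y ∂μ) * ∫⁻ x, G ‖x‖ ∂μ := by
  rw [lintegral_lintegral_swap (by fun_prop), ← lintegral_mul_const _ (by fun_prop)]
  refine lintegral_congr_ae <| ae_restrict_of_ae <| (μ.ae_ne 0).mono fun y hy ↦ ?_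
  simp_rw [mul_comm ‖_‖ ‖y‖]
  rw [lintegral_mul_const _ (by fun_prop), lintegral_comp_mul_norm μ G (norm_pos_iff.2 hy)]
  ring

theorem lintegral_comp_norm (g : ℝ → ℝ≥0∞) (hg : Measurable g) :
    ∫⁻ x, g ‖x‖ ∂μ = finrank ℝ E * μ (ball 0 1) *
      ∫⁻ r in Ioi (0 : ℝ), ENNReal.ofReal (r ^ (finrank ℝ E - 1)) * g r := by
  calc ∫⁻ x, g ‖x‖ ∂μ = ∫⁻ x : ({(0 : E)}ᶜ : Set E), g ‖x.1‖ ∂μ.comap (↑) := by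
        rw [lintegral_subtype_comap (measurableSet_singleton _).compl (fun x : E ↦ g ‖x‖),
          restrict_compl_singleton]
    _ = ∫⁻ x, g x.2 ∂μ.toSphere.prod (.volumeIoiPow (finrank ℝ E - 1)) := by
        simpa using μ.measurePreserving_homeomorphUnitSphereProd.lintegral_comp_emb
          (Homeomorph.measurableEmbedding _) (fun x ↦ g x.2.1)
    _ = μ.toSphere univ * ∫⁻ r : Ioi (0 : ℝ), g r ∂.volumeIoiPow (finrank ℝ E - 1) := by
        rw [lintegral_prod (fun x : sphere (0 : E) 1 × Ioi (0 : ℝ) ↦ g x.2)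
          (hg.comp (measurable_subtype_coe.comp measurable_snd)).aemeasurable]
        simp only [lintegral_const, mul_comm]
    _ = _ := by
        rw [Measure.toSphere_apply_univ, Measure.volumeIoiPow,
          lintegral_withDensity_eq_lintegral_mul _
            (measurable_subtype_coe.pow_const _).ennreal_ofReal
            (g := fun r : Ioi (0 : ℝ) ↦ g r) (hg.comp measurable_subtype_coe),
          ← lintegral_subtype_comap measurableSet_Ioi (fun r ↦ ENNReal.ofReal (r ^ _) * g r)]
        rfl

theorem lintegral_unitBall_norm_rpow {s : ℝ} (hs : -(finrank ℝ E : ℝ) < s) :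
    ∫⁻ y in ball 0 1, ENNReal.ofReal (‖y‖ ^ s) ∂μ
      = μ (ball 0 1) * ENNReal.ofReal (finrank ℝ E / (finrank ℝ E + s)) := by
  set d := finrank ℝ E
  have hd : 1 ≤ d := finrank_pos
  have hradial : ∫⁻ y in ball 0 1, ENNReal.ofReal (‖y‖ ^ s) ∂μ
      = ∫⁻ y, (Iio 1).indicator (fun r ↦ ENNReal.ofReal (r ^ s)) ‖y‖ ∂μ := by
    rw [← lintegral_indicator measurableSet_ball]
    congr 1 with y
    by_cases hy : ‖y‖ < 1 <;> simp [hy]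
  have hpolar : ∫⁻ r in Ioi (0 : ℝ), ENNReal.ofReal (r ^ (d - 1))
        * (Iio 1).indicator (fun r ↦ ENNReal.ofReal (r ^ s)) r
      = ∫⁻ r in Ioo (0 : ℝ) 1, ENNReal.ofReal (r ^ (d - 1 + s)) := by
    have hmul : ∀ r ∈ Ioi (0 : ℝ), ENNReal.ofReal (r ^ (d - 1))
          * (Iio 1).indicator (fun r ↦ ENNReal.ofReal (r ^ s)) r
        = (Iio 1).indicator (fun r ↦ ENNReal.ofReal (r ^ (d - 1 + s))) r := by
      intro r (hr : 0 < r)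
      by_cases hr1 : r ∈ Iio 1
      · rw [indicator_of_mem hr1, indicator_of_mem hr1, ← ofReal_mul (by positivity),
          Real.rpow_add hr, ← Real.rpow_natCast, Nat.cast_sub hd, Nat.cast_one]
      · simp [hr1]
    rw [setLIntegral_congr_fun measurableSet_Ioi hmul, lintegral_indicator measurableSet_Iio,
      Measure.restrict_restrict measurableSet_Iio, Iio_inter_Ioi]
  rw [hradial, lintegral_comp_norm μ _ (Measurable.indicator (by fun_prop) measurableSet_Iio),
    hpolar, lintegral_Ioo_zero_one_rpow (by linarith), mul_comm (d : ℝ≥0∞), mul_assoc,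
    ← ENNReal.ofReal_natCast, ← ENNReal.ofReal_mul (by positivity)]
  congr 2
  field_simp
  ring

theorem rpow_setLIntegral_unitBall_le {p q : ℝ} (hpq : p.HolderConjugate q) {f : E → ℝ≥0∞}
    (hf : AEMeasurable f (μ.restrict (ball 0 1))) :
    (∫⁻ y in ball 0 1, f y ∂μ) ^ p
      ≤ (∫⁻ y in ball 0 1, f y ^ p * ENNReal.ofReal (‖y‖ ^ (finrank ℝ E / (p * q) : ℝ)) ^ p ∂μ)
        * (∫⁻ y in ball 0 1, ENNReal.ofReal (‖y‖ ^ (-(finrank ℝ E : ℝ) / p)) ∂μ) ^ (p / q) := by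
  have hweight : ∀ y : E, ENNReal.ofReal (‖y‖ ^ (-(finrank ℝ E / (p * q) : ℝ))) ^ q
      = ENNReal.ofReal (‖y‖ ^ (-(finrank ℝ E : ℝ) / p)) := by
    intro y
    rw [ENNReal.ofReal_rpow_of_nonneg (by positivity) hpq.symm.nonneg,
      ← Real.rpow_mul (norm_nonneg y)]
    congr 2
    field_simp [hpq.symm.ne_zero]
  simp_rw [← hweight, ← ENNReal.mul_rpow_of_nonneg _ _ hpq.nonneg]
  refine lintegral_rpow_le_mul_of_mul_eq_one hpq hf (by fun_prop) (by fun_prop) ?_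
  filter_upwards [ae_restrict_of_ae (μ.ae_ne 0)] with y hy
  rw [← ofReal_mul (by positivity), ← Real.rpow_add (norm_pos_iff.2 hy), add_neg_cancel,
    Real.rpow_zero, ofReal_one]

theorem lintegral_rpow_lintegral_unitBall_le {F : ℝ → ℝ≥0∞} (hF : Measurable F) {p : ℝ}
    (hp : 1 < p) :
    (∫⁻ x, (∫⁻ y in ball 0 1, F (‖x‖ * ‖y‖) ∂μ) ^ p ∂μ) ^ (1 / p)
      ≤ (∫⁻ y in ball 0 1, ENNReal.ofReal (‖y‖ ^ (-(finrank ℝ E : ℝ) / p)) ∂μ)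
        * (∫⁻ x, F ‖x‖ ^ p ∂μ) ^ (1 / p) := by
  obtain ⟨q, hpq⟩ : ∃ q, p.HolderConjugate q := ⟨_, .conjExponent hp⟩
  set d : ℝ := (finrank ℝ E : ℝ)
  set J := ∫⁻ y in ball 0 1, ENNReal.ofReal (‖y‖ ^ (-d / p)) ∂μ
  set I := ∫⁻ x, F ‖x‖ ^ p ∂μ
  set w : E → ℝ≥0∞ := fun y ↦ ENNReal.ofReal (‖y‖ ^ (d / (p * q))) ^ p
  have hp0 : 0 < p := hpq.pos
  have hJ : ∫⁻ y in ball 0 1, ENNReal.ofReal ((‖y‖ ^ finrank ℝ E)⁻¹) * w y ∂μ = J := by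
    refine lintegral_congr_ae <| ae_restrict_of_ae <| (μ.ae_ne 0).mono fun y hy ↦ ?_
    simp only [w]
    rw [ENNReal.ofReal_rpow_of_nonneg (by positivity) hp0.le, ← ofReal_mul (by positivity),
      ← Real.rpow_natCast, ← Real.rpow_neg (norm_nonneg y), ← Real.rpow_mul (norm_nonneg y),
      ← Real.rpow_add (norm_pos_iff.2 hy)]
    congr 2
    simp only [d]
    field_simp [hpq.symm.ne_zero]
    linear_combination -d * hpq.mul_eq_add
  have hsplit : J ^ p = J * J ^ (p / q) := by
    conv_lhs => rw [show p = 1 + p / q by rw [hpq.div_conj_eq_sub_one]; ring]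
    rw [ENNReal.rpow_add_of_nonneg _ _ zero_le_one (div_nonneg hp0.le hpq.symm.nonneg),
      ENNReal.rpow_one]
  have hTonelli : ∫⁻ x, ∫⁻ y in ball 0 1, F (‖x‖ * ‖y‖) ^ p * w y ∂μ ∂μ = J * I := by
    have h := lintegral_lintegral_unitBall_comp_mul_norm μ (G := fun r ↦ F r ^ p)
      (by fun_prop) (w := w) (by fun_prop)
    beta_reduce at h
    rw [h, hJ]
  calc (∫⁻ x, (∫⁻ y in ball 0 1, F (‖x‖ * ‖y‖) ∂μ) ^ p ∂μ) ^ (1 / p)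
      ≤ (∫⁻ x, (∫⁻ y in ball 0 1, F (‖x‖ * ‖y‖) ^ p * w y ∂μ) * J ^ (p / q) ∂μ) ^ (1 / p) := by
        gcongr with x
        exact rpow_setLIntegral_unitBall_le μ hpq (by fun_prop)
    _ = (J ^ p * I) ^ (1 / p) := by
        rw [lintegral_mul_const _ (by fun_prop), hTonelli, hsplit, mul_right_comm]
    _ = J * I ^ (1 / p) := by
        rw [ENNReal.mul_rpow_of_nonneg _ _ (by positivity), ← ENNReal.rpow_mul,
          mul_one_div_cancel hpq.ne_zero, ENNReal.rpow_one]

end AddHaar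

/-- For a nonnegative radial function `f(x) = F(|x|)`, the spherical Hardy operator has the
pointwise representation `𝓗f(x) = (1/ν_n) ∫_{B(0,1)} F(|x||y|) dy`, hence (by Minkowski's
integral inequality) `‖𝓗f‖_{L^p} ≤ (p/(p-1)) ‖f‖_{L^p}`, where
`(1/ν_n) ∫_{B(0,1)} |y|^{-n/p} dy = p/(p-1)`. -/
theorem sphericalHardy_radial (n : ℕ) (hn : 1 ≤ n) (p : ℝ) (hp : 1 < p)
    (F : ℝ → ℝ≥0∞) (hF : Measurable F) :
    (∀ x : EuclideanSpace ℝ (Fin n), x ≠ 0 →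
      (volume (ball (0 : EuclideanSpace ℝ (Fin n)) ‖x‖))⁻¹ *
          (∫⁻ y in closedBall (0 : EuclideanSpace ℝ (Fin n)) ‖x‖, F ‖y‖)
        = (volume (ball (0 : EuclideanSpace ℝ (Fin n)) 1))⁻¹ *
          ∫⁻ y in ball (0 : EuclideanSpace ℝ (Fin n)) 1, F (‖x‖ * ‖y‖)) ∧
    ((∫⁻ x : EuclideanSpace ℝ (Fin n),
          ((volume (ball (0 : EuclideanSpace ℝ (Fin n)) ‖x‖))⁻¹ *
            ∫⁻ y in closedBall (0 : EuclideanSpace ℝ (Fin n)) ‖x‖, F ‖y‖) ^ p) ^ (1 / p)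
        ≤ (volume (ball (0 : EuclideanSpace ℝ (Fin n)) 1))⁻¹ *
            (∫⁻ y in ball (0 : EuclideanSpace ℝ (Fin n)) 1,
              ENNReal.ofReal (‖y‖ ^ (-(n : ℝ) / p))) *
          (∫⁻ x : EuclideanSpace ℝ (Fin n), (F ‖x‖) ^ p) ^ (1 / p)) ∧
    (∫⁻ y in ball (0 : EuclideanSpace ℝ (Fin n)) 1, ENNReal.ofReal (‖y‖ ^ (-(n : ℝ) / p)))
      = volume (ball (0 : EuclideanSpace ℝ (Fin n)) 1) * ENNReal.ofReal (p / (p - 1)) := by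
  have : Nonempty (Fin n) := ⟨⟨0, hn⟩⟩
  have hdim : finrank ℝ (EuclideanSpace ℝ (Fin n)) = n := finrank_euclideanSpace_fin
  have hrep := fun x (hx : x ≠ 0) ↦ inv_measure_ball_mul_setLIntegral_closedBall_comp_norm
    (volume : Measure (EuclideanSpace ℝ (Fin n))) F hx
  refine ⟨hrep, ?_, ?_⟩
  · have hc : (volume (ball (0 : EuclideanSpace ℝ (Fin n)) 1))⁻¹ ≠ ∞ :=
      ENNReal.inv_ne_top.2 (measure_ball_pos _ 0 one_pos).ne'
    rw [lintegral_congr_ae ((volume.ae_ne 0).mono fun x hx ↦ by rw [hrep x hx]),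
      lintegral_const_mul_rpow_rpow_one_div (by linarith) hc, mul_assoc]
    gcongr
    have h := lintegral_rpow_lintegral_unitBall_le
      (volume : Measure (EuclideanSpace ℝ (Fin n))) hF hp
    rwa [hdim] at h
  · have hs : -(finrank ℝ (EuclideanSpace ℝ (Fin n)) : ℝ) < -n / p := by
      rw [hdim, neg_div, neg_lt_neg_iff]
      exact div_lt_self (by exact_mod_cast hn) hp
    rw [lintegral_unitBall_norm_rpow _ hs, hdim]
    congr 2
    field_simp
    ring
end
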